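/- arXiv:1801.07321 — 8 statements merged into one kernel-verified Lean document; each statement's English description precedes it below -/
import Mathlib

section
/- Let enc: Σ → Γ⁺ be an encoding (a map into nonempty words with the prefix property) with k₁ = max length and k₂ = min length of codewords. Then η(L)/k₁ ≤ η(enc(L)) ≤ η(L)/k₂ for every language L ⊆ Σ*, where enc is extended to words homomorphically and enc(L) = {enc(w) | w ∈ L}. -/
open Filter

/-- The `n`-th Myhill–Nerode approximation: `u ~ v` iff all witnesses of length at most `n`
agree. -/
def thetaN {α : Type*} (L : Set (List α)) (n : ℕ) (u v : List α) : Prop :=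
  ∀ w : List α, w.length ≤ n → ((u ++ w) ∈ L ↔ (v ++ w) ∈ L)

/-- The index (number of classes) of `thetaN L n`. -/
noncomputable def indexN {α : Type*} (L : Set (List α)) (n : ℕ) : ℕ :=
  Nat.card (Quot (thetaN L n))

/-- Topological entropy of a language, with values in `[0,∞]`. -/
noncomputable def entropy {α : Type*} (L : Set (List α)) : ENNReal :=
  Filter.limsup (fun n : ℕ => ENNReal.ofReal (Real.logb 2 (indexN L n) / n)) Filter.atTop

/-- Homomorphic extension of a letter-encoding to words. -/
def encWord {α β : Type*} (enc : α → List β) (u : List α) : List β :=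
  (u.map enc).flatten

/-! Encoding maps `Θ_n(L)`-inequivalent words to `Θ_{k₁ n}(enc L)`-inequivalent ones, since a
witness of length `n` encodes to one of length at most `k₁ n`; hence
`ind Θ_n(L) ≤ ind Θ_{k₁ n}(enc L)`. Conversely, because `enc` is a prefix code, every word that
extends into `enc L` has the form `enc(x) r` with `|r| ≤ k₁`, and its `Θ_n(enc L)`-class is
determined by `r` and the `Θ_m(L)`-class of `x`, where `m = (k₁ + n) / k₂`; all remaining words
form one class. So `ind Θ_n(enc L) ≤ C · ind Θ_m(L)` with `C` independent of `n`. Taking `log₂`,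
dividing by `n` and passing to the limsup gives both bounds. -/

open scoped ENNReal Topology

section GrowthRate

open ENNReal

lemma limsup_le_limsup_of_le_comp_mul_add {ι κ : Type*} {f : Filter ι} [NeBot f]
    {g : Filter κ} {x u v : ι → ℝ≥0∞} {y : κ → ℝ≥0∞} {φ : ι → κ}
    (hφ : Tendsto φ f g) (hu : Tendsto u f (𝓝 0)) (hv : Tendsto v f (𝓝 1))
    (h : ∀ᶠ i in f, x i ≤ y (φ i) * v i + u i) : limsup x f ≤ limsup y g :=
  calc limsup x f ≤ limsup ((y ∘ φ) * v + u) f := limsup_le_limsup h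
    _ = limsup ((y ∘ φ) * v) f := limsup_add_of_right_tendsto_zero hu _
    _ ≤ limsup (y ∘ φ) f * limsup v f :=
      limsup_mul_le' (by simp [hv.limsup_eq]) (by simp [hv.limsup_eq])
    _ = limsup (y ∘ φ) f := by rw [hv.limsup_eq, mul_one]
    _ ≤ limsup y g := hφ.limsup_comp_le_limsup

lemma logb_two_natCast_nonneg (n : ℕ) : 0 ≤ Real.logb 2 n :=
  div_nonneg (Real.log_natCast_nonneg n) (Real.log_nonneg one_le_two)

lemma logb_two_natCast_mono : Monotone fun n : ℕ => Real.logb 2 n := by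
  intro m n hmn
  rcases m.eq_zero_or_pos with rfl | hm
  · simpa using logb_two_natCast_nonneg n
  · exact Real.logb_le_logb_of_le one_lt_two (by positivity) (by exact_mod_cast hmn)

lemma logb_two_natCast_mul_le (m n : ℕ) :
    Real.logb 2 (m * n : ℕ) ≤ Real.logb 2 m + Real.logb 2 n := by
  rcases m.eq_zero_or_pos with rfl | hm
  · simpa using logb_two_natCast_nonneg n
  rcases n.eq_zero_or_pos with rfl | hn
  · simpa using logb_two_natCast_nonneg m
  rw [Nat.cast_mul, Real.logb_mul (by positivity) (by positivity)]

/-- `entropy L` unfolds to `growthRate (indexN L)`. -/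
noncomputable def growthRate (a : ℕ → ℕ) : ℝ≥0∞ :=
  limsup (fun n : ℕ => ENNReal.ofReal (Real.logb 2 (a n) / n)) atTop

lemma growthRate_le_mul_growthRate {a b : ℕ → ℕ} {k : ℕ} (hk : 0 < k) (h : ∀ n, a n ≤ b (k * n)) :
    growthRate a ≤ k * growthRate b := by
  have hφ : Tendsto (k * ·) atTop atTop := tendsto_id.const_mul_atTop' hk
  have hpoint (n : ℕ) : ENNReal.ofReal (Real.logb 2 (a n) / n) ≤
      k * ENNReal.ofReal (Real.logb 2 (b (k * n)) / (k * n : ℕ)) := by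
    rw [← ofReal_natCast, ← ofReal_mul (Nat.cast_nonneg k), Nat.cast_mul, mul_div_assoc',
      mul_div_mul_left _ _ (by positivity)]
    exact ofReal_le_ofReal (div_le_div_of_nonneg_right (logb_two_natCast_mono (h n)) n.cast_nonneg)
  calc growthRate a
      ≤ limsup (fun n : ℕ => k * ENNReal.ofReal (Real.logb 2 (b (k * n)) / (k * n : ℕ))) atTop :=
        limsup_le_limsup (.of_forall hpoint)
    _ = k * limsup (fun n : ℕ => ENNReal.ofReal (Real.logb 2 (b (k * n)) / (k * n : ℕ))) atTop :=
        ENNReal.limsup_const_mul_of_ne_top (natCast_ne_top k)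
    _ ≤ k * growthRate b := by
        gcongr
        exact hφ.limsup_comp_le_limsup (u := fun m : ℕ => ENNReal.ofReal (Real.logb 2 (b m) / m))

lemma growthRate_mul_le_growthRate {a b : ℕ → ℕ} {C c k : ℕ} (hk : 0 < k)
    (h : ∀ n, b n ≤ C * a ((c + n) / k)) : growthRate b * k ≤ growthRate a := by
  have hφ : Tendsto (fun n => (c + n) / k) atTop atTop :=
    tendsto_atTop_mono (fun n => Nat.div_le_div_right (Nat.le_add_left n c))
      (Nat.tendsto_div_const_atTop hk.ne')
  have hu : Tendsto (fun n : ℕ => ENNReal.ofReal (k * Real.logb 2 C / n)) atTop (𝓝 0) := by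
    simpa using ENNReal.tendsto_ofReal (tendsto_const_div_atTop_nhds_zero_nat (k * Real.logb 2 C))
  have hv : Tendsto (fun n : ℕ => ENNReal.ofReal (1 + c / n)) atTop (𝓝 1) := by
    simpa using ENNReal.tendsto_ofReal ((tendsto_const_div_atTop_nhds_zero_nat (c : ℝ)).const_add 1)
  rw [mul_comm, growthRate, ← ENNReal.limsup_const_mul_of_ne_top (natCast_ne_top k)]
  refine limsup_le_limsup_of_le_comp_mul_add hφ hu hv ?_
  -- `k m ≤ c + n` turns `k log₂ a_m / n` into at most `(log₂ a_m / m) (1 + c / n)`.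
  filter_upwards [eventually_ge_atTop k] with n hn
  set m := (c + n) / k
  have hm : 0 < m := Nat.div_pos (le_add_left hn) hk
  have hn0 : (n : ℝ) ≠ 0 := by exact_mod_cast (hk.trans_le hn).ne'
  have hkm : (k * m : ℝ) ≤ c + n := by exact_mod_cast Nat.mul_div_le (c + n) k
  have hA := logb_two_natCast_nonneg (a m)
  have hB : Real.logb 2 (b n) ≤ Real.logb 2 C + Real.logb 2 (a m) :=
    (logb_two_natCast_mono (h n)).trans (logb_two_natCast_mul_le C (a m))
  have hkA : k * Real.logb 2 (a m) ≤ Real.logb 2 (a m) / m * (c + n) := by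
    rw [div_mul_eq_mul_div, le_div_iff₀ (by positivity)]
    linarith [mul_le_mul_of_nonneg_left hkm hA]
  rw [← ofReal_natCast, ← ofReal_mul k.cast_nonneg, ← ofReal_mul (by positivity),
    ← ofReal_add (by positivity) ?_]
  · refine ofReal_le_ofReal ?_
    calc (k : ℝ) * (Real.logb 2 (b n) / n)
        = k * Real.logb 2 (b n) / n := mul_div_assoc' ..
      _ ≤ (Real.logb 2 (a m) / m * (c + n) + k * Real.logb 2 C) / n := by
          gcongr
          linarith [mul_le_mul_of_nonneg_left hB k.cast_nonneg]
      _ = _ := by field_simp; ring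
  · exact div_nonneg (mul_nonneg k.cast_nonneg (logb_two_natCast_nonneg C)) n.cast_nonneg

end GrowthRate

section MyhillNerode

variable {α : Type*}

lemma thetaN_equivalence (L : Set (List α)) (n : ℕ) : Equivalence (thetaN L n) :=
  ⟨fun _ _ _ => Iff.rfl, fun h w hw => (h w hw).symm, fun h h' w hw => (h w hw).trans (h' w hw)⟩

lemma thetaN_quot_mk_eq_iff {L : Set (List α)} {n : ℕ} {u v : List α} :
    Quot.mk (thetaN L n) u = Quot.mk (thetaN L n) v ↔ thetaN L n u v := by
  rw [Quot.eq, (thetaN_equivalence L n).eqvGen_iff]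

instance [Finite α] (L : Set (List α)) (n : ℕ) : Finite (Quot (thetaN L n)) := by
  have : Finite {w : List α // w.length ≤ n} := (List.finite_length_le α n).to_subtype
  refine Finite.of_injective (fun q (w : {w : List α // w.length ≤ n}) => q.out ++ w.1 ∈ L) ?_
  intro q q' h
  rw [← q.out_eq, ← q'.out_eq, thetaN_quot_mk_eq_iff]
  exact fun w hw => iff_of_eq (congrFun h ⟨w, hw⟩)

lemma indexN_le_card_of_eq_imp_thetaN {X : Type*} [Finite X] {L : Set (List α)} {n : ℕ}
    (F : List α → X) (hF : ∀ u v, F u = F v → thetaN L n u v) : indexN L n ≤ Nat.card X :=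
  Nat.card_le_card_of_injective (fun q => F q.out) fun q q' h => by
    rw [← q.out_eq, ← q'.out_eq, thetaN_quot_mk_eq_iff]
    exact hF _ _ h

end MyhillNerode

section Encoding

variable {α β : Type*} {enc : α → List β}

@[simp]
lemma encWord_nil : encWord enc [] = [] := rfl

@[simp]
lemma encWord_cons (a : α) (x : List α) : encWord enc (a :: x) = enc a ++ encWord enc x := by
  simp [encWord]

@[simp]
lemma encWord_append (x y : List α) : encWord enc (x ++ y) = encWord enc x ++ encWord enc y := by
  simp [encWord]

lemma length_encWord_le {c : ℕ} (hc : ∀ a, (enc a).length ≤ c) (x : List α) :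
    (encWord enc x).length ≤ c * x.length := by
  induction x with
  | nil => simp
  | cons a x ih => simp only [encWord_cons, List.length_append, List.length_cons]; grind [hc a]

lemma le_length_encWord {k : ℕ} (hk : ∀ a, k ≤ (enc a).length) (x : List α) :
    k * x.length ≤ (encWord enc x).length := by
  induction x with
  | nil => simp
  | cons a x ih => simp only [encWord_cons, List.length_append, List.length_cons]; grind [hk a]

lemma exists_eq_encWord_append_of_prefix {c : ℕ} (hc : ∀ a, (enc a).length ≤ c) {u : List β}
    {z : List α} (h : u <+: encWord enc z) : ∃ x r, u = encWord enc x ++ r ∧ r.length ≤ c := by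
  induction z generalizing u with
  | nil => exact ⟨[], [], by simpa using h, Nat.zero_le c⟩
  | cons b z ih =>
    rw [encWord_cons] at h
    rcases List.prefix_or_prefix_of_prefix h ((enc b).prefix_append _) with h | ⟨u, rfl⟩
    · exact ⟨[], u, by simp, h.length_le.trans (hc b)⟩
    · obtain ⟨x, r, rfl, hr⟩ := ih ((List.prefix_append_right_inj _).mp h)
      exact ⟨b :: x, r, by simp, hr⟩

variable (henc : ∀ a, enc a ≠ []) (hpre : ∀ a b : α, a ≠ b → ¬ enc a <+: enc b)
include henc hpre

lemma prefix_of_encWord_prefix {x z : List α} (h : encWord enc x <+: encWord enc z) : x <+: z := by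
  induction x generalizing z with
  | nil => exact z.nil_prefix
  | cons a x ih =>
    cases z with
    | nil => simp [henc a] at h
    | cons b z =>
      rw [encWord_cons, encWord_cons] at h
      obtain rfl : a = b := by
        by_contra hab
        rcases List.prefix_or_prefix_of_prefix (((enc a).prefix_append _).trans h)
          ((enc b).prefix_append _) with h' | h'
        exacts [hpre a b hab h', hpre b a (Ne.symm hab) h']
      exact List.cons_prefix_cons.mpr ⟨rfl, ih ((List.prefix_append_right_inj _).mp h)⟩

lemma encWord_injective : Function.Injective (encWord enc) := fun _ _ h =>
  (prefix_of_encWord_prefix henc hpre (h ▸ List.prefix_rfl)).sublist.antisymm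
    (prefix_of_encWord_prefix henc hpre (h ▸ List.prefix_rfl)).sublist

lemma exists_eq_append_of_encWord_append_eq {x z : List α} {s : List β}
    (h : encWord enc x ++ s = encWord enc z) : ∃ y, z = x ++ y ∧ s = encWord enc y := by
  obtain ⟨y, rfl⟩ := prefix_of_encWord_prefix henc hpre ⟨s, h⟩
  exact ⟨y, rfl, by simpa using h⟩

end Encoding

section IndexBounds

variable {α β : Type*} {enc : α → List β}
  (henc : ∀ a, enc a ≠ []) (hpre : ∀ a b : α, a ≠ b → ¬ enc a <+: enc b)
include henc hpre

lemma indexN_le_indexN_image_encWord [Finite β] {c : ℕ} (hc : ∀ a, (enc a).length ≤ c)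
    (L : Set (List α)) (n : ℕ) : indexN L n ≤ indexN (encWord enc '' L) (c * n) := by
  refine indexN_le_card_of_eq_imp_thetaN
    (fun u => Quot.mk (thetaN (encWord enc '' L) (c * n)) (encWord enc u)) fun u v huv w hw => ?_
  have := thetaN_quot_mk_eq_iff.mp huv (encWord enc w)
    ((length_encWord_le hc w).trans (Nat.mul_le_mul_left c hw))
  simpa only [← encWord_append, (encWord_injective henc hpre).mem_set_image] using this

/-- A codeword is at least `k` letters long, so a witness of length `≤ n` appended to `r` covers
at most `(c + n) / k` letters of the source word. -/
lemma thetaN_image_encWord_append {k c n : ℕ} (hk : ∀ a, k ≤ (enc a).length) (hkpos : 0 < k)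
    {L : Set (List α)} {x x' : List α} (hxx' : thetaN L ((c + n) / k) x x') {r : List β}
    (hr : r.length ≤ c) :
    thetaN (encWord enc '' L) n (encWord enc x ++ r) (encWord enc x' ++ r) := by
  suffices key : ∀ {x x'}, thetaN L ((c + n) / k) x x' → ∀ w : List β, w.length ≤ n →
      encWord enc x ++ r ++ w ∈ encWord enc '' L → encWord enc x' ++ r ++ w ∈ encWord enc '' L from
    fun w hw => ⟨key hxx' w hw, key ((thetaN_equivalence L _).symm hxx') w hw⟩
  rintro x x' hxx' w hw ⟨z, hz, hzx⟩
  obtain ⟨y, rfl, hy⟩ :=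
    exists_eq_append_of_encWord_append_eq henc hpre (x := x) (by rw [hzx, List.append_assoc])
  have hylen : y.length ≤ (c + n) / k := by
    rw [Nat.le_div_iff_mul_le hkpos, mul_comm]
    calc k * y.length ≤ (encWord enc y).length := le_length_encWord hk y
      _ = r.length + w.length := by rw [← hy, List.length_append]
      _ ≤ c + n := add_le_add hr hw
  exact ⟨x' ++ y, (hxx' y hylen).mp hz, by simp [← hy]⟩

lemma indexN_image_encWord_le [Finite α] [Finite β] {k c : ℕ} (hc : ∀ a, (enc a).length ≤ c)
    (hk : ∀ a, k ≤ (enc a).length) (hkpos : 0 < k) (L : Set (List α)) (n : ℕ) :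
    indexN (encWord enc '' L) n ≤
      Nat.card (Option {r : List β // r.length ≤ c}) * indexN L ((c + n) / k) := by
  classical
  have : Finite {r : List β // r.length ≤ c} := (List.finite_length_le β c).to_subtype
  let IsShortExt (u : List β) : Prop :=
    ∃ p : List α × List β, u = encWord enc p.1 ++ p.2 ∧ p.2.length ≤ c
  let F (u : List β) : Option {r : List β // r.length ≤ c} × Quot (thetaN L ((c + n) / k)) :=
    if h : IsShortExt u then (some ⟨h.choose.2, h.choose_spec.2⟩, Quot.mk _ h.choose.1)
    else (none, Quot.mk _ [])
  have hdead {u : List β} (hu : ¬ IsShortExt u) (w : List β) : u ++ w ∉ encWord enc '' L := by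
    rintro ⟨z, -, hz⟩
    obtain ⟨x, r, hxr⟩ := exists_eq_encWord_append_of_prefix hc ⟨w, hz.symm⟩
    exact hu ⟨(x, r), hxr⟩
  refine (indexN_le_card_of_eq_imp_thetaN F fun u v huv => ?_).trans (Nat.card_prod _ _).le
  by_cases hu : IsShortExt u <;> by_cases hv : IsShortExt v <;>
    simp only [F, hu, hv, dite_true, dite_false, Prod.mk.injEq, Option.some.injEq,
      Subtype.mk.injEq, reduceCtorEq, false_and] at huv
  · obtain ⟨hr, hxx'⟩ := huv
    rw [hu.choose_spec.1, hv.choose_spec.1, hr]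
    exact thetaN_image_encWord_append henc hpre hk hkpos (thetaN_quot_mk_eq_iff.mp hxx')
      hv.choose_spec.2
  · exact fun w _ => iff_of_false (hdead hu w) (hdead hv w)

end IndexBounds

theorem entropy_encoding_bounds {α β : Type*} [Fintype α] [Fintype β]
    (enc : α → List β) (henc : ∀ a, enc a ≠ [])
    (hpre : ∀ a b : α, a ≠ b → ¬ (enc a <+: enc b))
    (k₁ k₂ : ℕ)
    (hk₁ : IsGreatest (Set.range fun a => (enc a).length) k₁)
    (hk₂ : IsLeast (Set.range fun a => (enc a).length) k₂)
    (L : Set (List α)) :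
    entropy L / (k₁ : ENNReal) ≤ entropy (encWord enc '' L) ∧
      entropy (encWord enc '' L) ≤ entropy L / (k₂ : ENNReal) := by
  have hle₁ (a : α) : (enc a).length ≤ k₁ := hk₁.2 ⟨a, rfl⟩
  have hle₂ (a : α) : k₂ ≤ (enc a).length := hk₂.2 ⟨a, rfl⟩
  obtain ⟨a₀, ha₀⟩ := hk₂.1
  have hk₂pos : 0 < k₂ := ha₀ ▸ List.length_pos_iff.mpr (henc a₀)
  have hk₁pos : 0 < k₁ := hk₂pos.trans_le (ha₀ ▸ hle₁ a₀)
  constructor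
  · refine ENNReal.div_le_of_le_mul' (growthRate_le_mul_growthRate hk₁pos fun n => ?_)
    exact indexN_le_indexN_image_encWord henc hpre hle₁ L n
  · rw [ENNReal.le_div_iff_mul_le (by simp [hk₂pos.ne']) (by simp)]
    exact growthRate_mul_le_growthRate hk₂pos
      (indexN_image_encWord_le henc hpre hle₁ hle₂ hk₂pos L)
end

section
/- The Dyck language over an alphabet Γ has topological entropy η(Dyck_Γ) = log₂|Γ|. More precisely, ind Θ_n(Dyck_Γ) = |Γ^{≤n}| + 1 for all n ≥ 1. -/
open Filter

/-- The Dyck language over `Γ`: letters `Sum.inl a` are opening and `Sum.inr a` closing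
parentheses of sort `a`; generated by `S → ε | a S ā S`. -/
inductive IsDyck (Γ : Type*) : List (Γ ⊕ Γ) → Prop
  | nil : IsDyck Γ []
  | node (a : Γ) {u v : List (Γ ⊕ Γ)} : IsDyck Γ u → IsDyck Γ v →
      IsDyck Γ (Sum.inl a :: (u ++ Sum.inr a :: v))

namespace DyckAux

variable {Γ : Type*} [DecidableEq Γ]

def dstep : (Γ ⊕ Γ) → List (Γ ⊕ Γ) → List (Γ ⊕ Γ)
  | Sum.inl a, Sum.inr b :: r => if a = b then r else Sum.inl a :: Sum.inr b :: r
  | x, r => x :: r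

def red (l : List (Γ ⊕ Γ)) : List (Γ ⊕ Γ) := l.foldr dstep []

@[simp] lemma dstep_inr (a : Γ) (r : List (Γ ⊕ Γ)) : dstep (Sum.inr a) r = Sum.inr a :: r := by
  cases r with
  | nil => rfl
  | cons x r => cases x <;> rfl

@[simp] lemma dstep_nil (x : Γ ⊕ Γ) : dstep x [] = [x] := by cases x <;> rfl

@[simp] lemma dstep_inl_inl (a b : Γ) (r : List (Γ ⊕ Γ)) :
    dstep (Sum.inl a) (Sum.inl b :: r) = Sum.inl a :: Sum.inl b :: r := rfl

@[simp] lemma dstep_inl_inr (a b : Γ) (r : List (Γ ⊕ Γ)) :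
    dstep (Sum.inl a) (Sum.inr b :: r) =
      if a = b then r else Sum.inl a :: Sum.inr b :: r := rfl

lemma foldr_dstep_swap (x : Γ ⊕ Γ) (s r : List (Γ ⊕ Γ)) :
    List.foldr dstep r (dstep x s) = dstep x (List.foldr dstep r s) := by
  cases x with
  | inl a =>
    cases s with
    | nil => rfl
    | cons y s' =>
      cases y with
      | inl b => rfl
      | inr b =>
        by_cases h : a = b
        · simp [h]
        · simp [h]
  | inr a => simp

lemma foldr_dstep_red (u r : List (Γ ⊕ Γ)) :
    List.foldr dstep r (red u) = List.foldr dstep r u := by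
  induction u with
  | nil => rfl
  | cons x u ih =>
    show List.foldr dstep r (dstep x (red u)) = dstep x (List.foldr dstep r u)
    rw [foldr_dstep_swap, ih]

@[simp] lemma red_cons (x : Γ ⊕ Γ) (l : List (Γ ⊕ Γ)) : red (x :: l) = dstep x (red l) := rfl

lemma red_append (u w : List (Γ ⊕ Γ)) : red (u ++ w) = List.foldr dstep (red w) u := by
  rw [red, List.foldr_append]; rfl

lemma red_red_append (u w : List (Γ ⊕ Γ)) : red (red u ++ w) = red (u ++ w) := by
  rw [red_append, red_append, foldr_dstep_red]

lemma foldr_of_red_nil {u : List (Γ ⊕ Γ)} (h : red u = []) (r : List (Γ ⊕ Γ)) :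
    List.foldr dstep r u = r := by
  rw [← foldr_dstep_red, h]; rfl

@[simp] lemma red_map_inl (s : List Γ) : red (s.map Sum.inl) = s.map Sum.inl := by
  induction s with
  | nil => rfl
  | cons a s ih =>
    simp only [List.map_cons, red_cons, ih]
    cases s <;> simp

@[simp] lemma red_map_inr (s : List Γ) : red (s.map Sum.inr) = s.map Sum.inr := by
  induction s with
  | nil => rfl
  | cons a s ih => simp [ih]

lemma length_dstep_le (x : Γ ⊕ Γ) (r : List (Γ ⊕ Γ)) : (dstep x r).length ≤ r.length + 1 := by
  cases x with
  | inl a =>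
    cases r with
    | nil => simp
    | cons y r =>
      cases y with
      | inl b => simp
      | inr b =>
        by_cases h : a = b <;> simp [h] <;> omega
  | inr a => simp

lemma length_red_le (l : List (Γ ⊕ Γ)) : (red l).length ≤ l.length := by
  induction l with
  | nil => simp [red]
  | cons x l ih =>
    calc (red (x :: l)).length ≤ (red l).length + 1 := length_dstep_le x (red l)
    _ ≤ l.length + 1 := by omega
    _ = (x :: l).length := rfl

/-- dstep produces `[]` only in the cancellation case. -/
lemma dstep_eq_nil {x : Γ ⊕ Γ} {r : List (Γ ⊕ Γ)} (h : dstep x r = []) :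
    ∃ a : Γ, x = Sum.inl a ∧ r = [Sum.inr a] := by
  cases x with
  | inl a =>
    cases r with
    | nil => simp at h
    | cons y r' =>
      cases y with
      | inl b => simp at h
      | inr b =>
        by_cases hab : a = b
        · subst hab
          rw [dstep_inl_inr, if_pos rfl] at h
          exact ⟨a, rfl, by rw [h]⟩
        · simp [hab] at h
  | inr a => simp at h

lemma red_split : ∀ n (u : List (Γ ⊕ Γ)), u.length ≤ n → ∀ (a : Γ) s,
    red u = Sum.inr a :: s →
    ∃ v w, u = v ++ Sum.inr a :: w ∧ red v = [] ∧ red w = s := by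
  intro n
  induction n using Nat.strong_induction_on with
  | _ n ih =>
    intro u hu a s hred
    cases u with
    | nil => simp [red] at hred
    | cons y t =>
      rw [red_cons] at hred
      cases y with
      | inr b =>
        rw [dstep_inr] at hred
        obtain ⟨hb, hs⟩ : Sum.inr b = (Sum.inr a : Γ ⊕ Γ) ∧ red t = s := by
          constructor
          · exact (List.cons.injEq _ _ _ _ ▸ hred).1
          · exact (List.cons.injEq _ _ _ _ ▸ hred).2
        obtain rfl : b = a := by injection hb
        exact ⟨[], t, by simp, rfl, hs⟩
      | inl b =>
        -- dstep (inl b) (red t) = inr a :: s ; must be cancellation since head is inr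
        cases hrt : red t with
        | nil => rw [hrt] at hred; simp at hred
        | cons z r' =>
          rw [hrt] at hred
          cases z with
          | inl c => simp at hred
          | inr c =>
            by_cases hbc : b = c
            · subst hbc
              rw [dstep_inl_inr, if_pos rfl] at hred
              -- red t = inr b :: r', r' = inr a :: s
              subst hred
              have ht : t.length < n := by
                have := hu; simp only [List.length_cons] at this; omega
              obtain ⟨v₁, w₁, htt, hv₁, hw₁⟩ :=
                ih t.length ht t le_rfl b (Sum.inr a :: s) hrt
              have hw₁len : w₁.length < n := by
                have : t.length = v₁.length + (1 + w₁.length) := by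
                  rw [htt]; simp; omega
                omega
              obtain ⟨v₂, w₂, hw₁eq, hv₂, hw₂⟩ :=
                ih w₁.length hw₁len w₁ le_rfl a s hw₁
              refine ⟨Sum.inl b :: (v₁ ++ Sum.inr b :: v₂), w₂, ?_, ?_, hw₂⟩
              · rw [htt, hw₁eq]; simp
              · rw [red_cons, red_append]
                rw [foldr_of_red_nil hv₁]
                show dstep (Sum.inl b) (dstep (Sum.inr b) (red v₂)) = []
                rw [dstep_inr, hv₂]
                simp
            · rw [dstep_inl_inr, if_neg hbc] at hred
              simp at hred

lemma isDyck_of_red_nil : ∀ n (u : List (Γ ⊕ Γ)), u.length ≤ n → red u = [] → IsDyck Γ u := by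
  intro n
  induction n using Nat.strong_induction_on with
  | _ n ih =>
    intro u hu hred
    cases u with
    | nil => exact IsDyck.nil
    | cons x t =>
      rw [red_cons] at hred
      obtain ⟨a, rfl, hrt⟩ := dstep_eq_nil hred
      have ht : t.length < n := by simp at hu; omega
      obtain ⟨v, w, rfl, hv, hw⟩ := red_split t.length t le_rfl a [] hrt
      have hvlen : v.length < n := by simp at hu ⊢; omega
      have hwlen : w.length < n := by simp at hu ⊢; omega
      exact IsDyck.node a (ih v.length hvlen v le_rfl hv) (ih w.length hwlen w le_rfl hw)

omit [DecidableEq Γ] in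
lemma isDyck_completion (s : List Γ) :
    IsDyck Γ (s.map Sum.inl ++ (s.reverse.map Sum.inr)) := by
  induction s with
  | nil => exact IsDyck.nil
  | cons a s ih =>
    have := IsDyck.node a ih IsDyck.nil
    simpa using this

lemma red_of_isDyck {u : List (Γ ⊕ Γ)} (h : IsDyck Γ u) : red u = [] := by
  induction h with
  | nil => rfl
  | node a hu hv ihu ihv =>
    rw [red_cons, red_append, foldr_of_red_nil ihu, red_cons, dstep_inr, ihv]
    simp

lemma isDyck_iff_red_nil {u : List (Γ ⊕ Γ)} : IsDyck Γ u ↔ red u = [] :=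
  ⟨red_of_isDyck, fun h => isDyck_of_red_nil u.length u le_rfl h⟩


-- balance count
def bal (l : List (Γ ⊕ Γ)) : ℤ :=
  (l.map fun x => Sum.elim (fun _ => (1 : ℤ)) (fun _ => (-1 : ℤ)) x).sum

@[simp] lemma bal_nil : bal ([] : List (Γ ⊕ Γ)) = 0 := rfl

@[simp] lemma bal_cons (x : Γ ⊕ Γ) (l : List (Γ ⊕ Γ)) :
    bal (x :: l) = Sum.elim (fun _ => (1 : ℤ)) (fun _ => (-1 : ℤ)) x + bal l := by
  simp [bal]

lemma bal_append (u w : List (Γ ⊕ Γ)) : bal (u ++ w) = bal u + bal w := by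
  simp [bal]

lemma bal_dstep (x : Γ ⊕ Γ) (r : List (Γ ⊕ Γ)) :
    bal (dstep x r) = bal (x :: r) := by
  cases x with
  | inl a =>
    cases r with
    | nil => rfl
    | cons y r' =>
      cases y with
      | inl b => rfl
      | inr b =>
        by_cases h : a = b
        · simp [h]
        · simp [h]
  | inr a => simp

lemma bal_red (l : List (Γ ⊕ Γ)) : bal (red l) = bal l := by
  induction l with
  | nil => rfl
  | cons x l ih => rw [red_cons, bal_dstep, bal_cons, bal_cons, ih]

@[simp] lemma bal_map_inl (s : List Γ) : bal (s.map Sum.inl) = s.length := by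
  induction s with
  | nil => rfl
  | cons a s ih => simp [ih]; omega

lemma neg_length_le_bal (w : List (Γ ⊕ Γ)) : -(w.length : ℤ) ≤ bal w := by
  induction w with
  | nil => simp
  | cons x w ih =>
    rw [bal_cons]
    have : -1 ≤ Sum.elim (fun _ => (1 : ℤ)) (fun _ => (-1 : ℤ)) x := by cases x <;> simp
    simp only [List.length_cons]
    push_cast
    omega

-- any prefix of a Dyck word reduces to an all-open word
lemma red_prefix_of_isDyck {z : List (Γ ⊕ Γ)} (h : IsDyck Γ z) :
    ∀ u w, z = u ++ w → ∃ s : List Γ, red u = s.map Sum.inl := by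
  induction h with
  | nil =>
    intro u w huw
    obtain ⟨rfl, rfl⟩ := List.append_eq_nil_iff.mp huw.symm
    exact ⟨[], rfl⟩
  | node a hp hq ihp ihq =>
    intro u w huw
    cases u with
    | nil => exact ⟨[], rfl⟩
    | cons x u₁ =>
      rw [List.cons_append] at huw
      injection huw with hx h₁
      subst hx
      rcases List.append_eq_append_iff.mp h₁.symm with ⟨k, hk1, _⟩ | ⟨c, hc1, hc2⟩
      · -- u₁ ++ k = p  (u₁ is a prefix of p)
        obtain ⟨s₁, hs₁⟩ := ihp u₁ k hk1
        refine ⟨a :: s₁, ?_⟩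
        rw [red_cons, hs₁]
        cases s₁ <;> simp
      · -- u₁ = p ++ c, inr a :: q = c ++ w
        cases c with
        | nil =>
          simp only [List.append_nil] at hc1
          subst hc1
          refine ⟨[a], ?_⟩
          rw [red_cons, red_of_isDyck hp]
          simp
        | cons y c' =>
          rw [List.cons_append] at hc2
          injection hc2 with hy hq'
          subst hy hc1
          obtain ⟨s₂, hs₂⟩ := ihq c' w hq'
          refine ⟨s₂, ?_⟩
          rw [red_cons, red_append, foldr_of_red_nil (red_of_isDyck hp)]
          show dstep (Sum.inl a) (dstep (Sum.inr a) (red c')) = _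
          rw [dstep_inr, hs₂, dstep_inl_inr, if_pos rfl]

lemma red_allOpen_of_append {u w : List (Γ ⊕ Γ)} (h : red (u ++ w) = []) :
    ∃ s : List Γ, red u = s.map Sum.inl :=
  red_prefix_of_isDyck (isDyck_iff_red_nil.mpr h) u w rfl

-- uniqueness of the completion
lemma completion_unique : ∀ (t m d : List Γ),
    List.foldr dstep (m.map Sum.inr) (t.map Sum.inl) = d.map Sum.inr →
    m = t.reverse ++ d := by
  intro t
  induction t with
  | nil =>
    intro m d h
    simp only [List.map_nil, List.foldr_nil] at h
    simpa using List.map_injective_iff.mpr Sum.inr_injective h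
  | cons a t ih =>
    intro m d h
    simp only [List.map_cons, List.foldr_cons] at h
    cases hF : List.foldr dstep (m.map Sum.inr) (t.map Sum.inl) with
    | nil => rw [hF] at h; simp at h; cases d <;> simp_all
    | cons z r' =>
      rw [hF] at h
      cases z with
      | inl c =>
        rw [dstep_inl_inl] at h
        cases d with
        | nil => simp at h
        | cons e d' => simp at h
      | inr c =>
        by_cases hac : a = c
        · subst hac
          rw [dstep_inl_inr, if_pos rfl] at h
          subst h
          have := ih m (a :: d) (by rw [hF]; simp)
          rw [this]; simp
        · rw [dstep_inl_inr, if_neg hac] at h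
          cases d with
          | nil => simp at h
          | cons e d' => simp at h
def toOpen : List (Γ ⊕ Γ) → Option (List Γ)
  | [] => some []
  | Sum.inl a :: l => (toOpen l).map (a :: ·)
  | Sum.inr _ :: _ => none

omit [DecidableEq Γ] in
lemma toOpen_eq_some {l : List (Γ ⊕ Γ)} {s : List Γ} :
    toOpen l = some s ↔ l = s.map Sum.inl := by
  induction l generalizing s with
  | nil => cases s <;> simp [toOpen]
  | cons x l ih =>
    cases x with
    | inl a =>
      cases s with
      | nil => simp [toOpen]
      | cons b s' =>
        simp only [toOpen, ih, Option.map_eq_some_iff, List.map_cons, List.cons.injEq,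
          Sum.inl.injEq]
        aesop
    | inr a => cases s <;> simp [toOpen]

omit [DecidableEq Γ] in
@[simp] lemma toOpen_map_inl (s : List Γ) : toOpen (s.map Sum.inl) = some s :=
  toOpen_eq_some.mpr rfl

def phi (n : ℕ) (u : List (Γ ⊕ Γ)) : Option {s : List Γ // s.length ≤ n} :=
  match toOpen (red u) with
  | some s => if h : s.length ≤ n then some ⟨s, h⟩ else none
  | none => none

lemma phi_eq_some {n : ℕ} {u : List (Γ ⊕ Γ)} {s : {s : List Γ // s.length ≤ n}} :
    phi n u = some s ↔ red u = s.1.map Sum.inl := by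
  unfold phi
  cases hT : toOpen (red u) with
  | none =>
    simp only
    constructor
    · intro h; simp at h
    · intro h; rw [toOpen_eq_some.mpr h] at hT; simp at hT
  | some t =>
    have ht : red u = t.map Sum.inl := toOpen_eq_some.mp hT
    simp only
    by_cases hlen : t.length ≤ n
    · rw [dif_pos hlen]
      constructor
      · rintro h; injection h with h; subst h; exact ht
      · intro h
        have : t = s.1 := by
          have := ht.symm.trans h
          exact List.map_injective_iff.mpr Sum.inl_injective this
        subst this; rfl
    · rw [dif_neg hlen]
      constructor
      · intro h; simp at h
      · intro h
        have : t = s.1 := List.map_injective_iff.mpr Sum.inl_injective (ht.symm.trans h)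
        exact absurd (this ▸ s.2) hlen

-- membership only depends on the reduced form
lemma mem_iff_red {u w : List (Γ ⊕ Γ)} :
    IsDyck Γ (u ++ w) ↔ red (red u ++ w) = [] := by
  rw [isDyck_iff_red_nil, red_red_append]

lemma live_answer {n : ℕ} {u : List (Γ ⊕ Γ)} {s : {s : List Γ // s.length ≤ n}}
    (h : phi n u = some s) :
    IsDyck Γ (u ++ s.1.reverse.map Sum.inr) := by
  rw [mem_iff_red, phi_eq_some.mp h]
  exact red_of_isDyck (isDyck_completion s.1)

lemma dead_answer {n : ℕ} {u : List (Γ ⊕ Γ)} (h : phi n u = none) :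
    ∀ w : List (Γ ⊕ Γ), w.length ≤ n → ¬ IsDyck Γ (u ++ w) := by
  intro w hw hD
  have hred : red (u ++ w) = [] := red_of_isDyck hD
  obtain ⟨s, hs⟩ := red_allOpen_of_append hred
  -- phi = none forces s.length > n
  have hslen : ¬ s.length ≤ n := by
    intro hle
    have h2 : phi n u = some ⟨s, hle⟩ := phi_eq_some.mpr hs
    exact Option.some_ne_none _ (h2.symm.trans h)
  -- balance argument
  have h0 : bal (u ++ w) = 0 := by rw [← bal_red, hred]; rfl
  have hu : bal u = s.length := by rw [← bal_red, hs]; simp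
  have := neg_length_le_bal w
  rw [bal_append, hu] at h0
  have : (s.length : ℤ) ≤ w.length := by omega
  omega

lemma theta_iff (n : ℕ) (u v : List (Γ ⊕ Γ)) :
    thetaN {w | IsDyck Γ w} n u v ↔ phi n u = phi n v := by
  constructor
  · intro h
    cases hu : phi n u with
    | some s =>
      cases hv : phi n v with
      | some t =>
        -- use the completion of s as a witness
        have hw : ((s.1.reverse.map Sum.inr : List (Γ ⊕ Γ))).length ≤ n := by
          simpa using s.2
        have h1 : IsDyck Γ (u ++ s.1.reverse.map Sum.inr) := live_answer hu
        have h2 : IsDyck Γ (v ++ s.1.reverse.map Sum.inr) :=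
          (h _ hw).mp h1
        -- v reduces to map inl t.1
        have h3 : red (t.1.map Sum.inl ++ s.1.reverse.map Sum.inr) = [] := by
          rw [← phi_eq_some.mp hv, red_red_append, ← isDyck_iff_red_nil]
          exact h2
        rw [red_append, red_map_inr] at h3
        have : s.1.reverse = t.1.reverse ++ [] := completion_unique t.1 s.1.reverse [] (by
          rw [h3]; rfl)
        rw [List.append_nil] at this
        exact congrArg some (Subtype.ext (List.reverse_injective this))
      | none =>
        exfalso
        have hw : ((s.1.reverse.map Sum.inr : List (Γ ⊕ Γ))).length ≤ n := by simpa using s.2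
        exact dead_answer hv _ hw ((h _ hw).mp (live_answer hu))
    | none =>
      cases hv : phi n v with
      | some t =>
        exfalso
        have hw : ((t.1.reverse.map Sum.inr : List (Γ ⊕ Γ))).length ≤ n := by simpa using t.2
        exact dead_answer hu _ hw ((h _ hw).mpr (live_answer hv))
      | none => rfl
  · intro h w hw
    cases hu : phi n u with
    | some s =>
      have hv : phi n v = some s := by rw [← h, hu]
      show IsDyck Γ (u ++ w) ↔ IsDyck Γ (v ++ w)
      rw [mem_iff_red, mem_iff_red, phi_eq_some.mp hu, phi_eq_some.mp hv]
    | none =>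
      have hv : phi n v = none := by rw [← h, hu]
      show IsDyck Γ (u ++ w) ↔ IsDyck Γ (v ++ w)
      exact iff_of_false (dead_answer hu w hw) (dead_answer hv w hw)

@[simp] lemma phi_inr_none (n : ℕ) (a : Γ) : phi n ([Sum.inr a] : List (Γ ⊕ Γ)) = none := by
  have h : red ([Sum.inr a] : List (Γ ⊕ Γ)) = [Sum.inr a] := by simp [red]
  unfold phi
  rw [h]
  rfl

@[simp] lemma phi_map_inl (n : ℕ) (s : {s : List Γ // s.length ≤ n}) :
    phi n (s.1.map Sum.inl) = some s :=
  phi_eq_some.mpr (by rw [red_map_inl])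

variable (Γ) in
noncomputable def classEquiv [Nonempty Γ] (n : ℕ) :
    Quot (thetaN {w | IsDyck Γ w} n) ≃ Option {s : List Γ // s.length ≤ n} where
  toFun := Quot.lift (phi n) fun u v h => (theta_iff n u v).mp h
  invFun o := Quot.mk _ (match o with
    | some s => s.1.map Sum.inl
    | none => [Sum.inr (Classical.arbitrary Γ)])
  left_inv := by
    apply Quot.ind
    intro u
    show Quot.mk _ (match phi n u with
      | some s => s.1.map Sum.inl
      | none => [Sum.inr (Classical.arbitrary Γ)]) = Quot.mk _ u
    cases h : phi n u with
    | some s => exact Quot.sound ((theta_iff n _ u).mpr (by rw [h, phi_map_inl]))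
    | none => exact Quot.sound ((theta_iff n _ u).mpr (by rw [h, phi_inr_none]))
  right_inv o := by
    cases o with
    | some s => exact phi_map_inl n s
    | none => exact phi_inr_none n _

instance finite_len_le (n : ℕ) [Finite Γ] : Finite {s : List Γ // s.length ≤ n} :=
  (List.finite_length_le Γ n).to_subtype

lemma indexN_dyck [Nonempty Γ] [Finite Γ] (n : ℕ) :
    indexN {w | IsDyck Γ w} n = Nat.card {s : List Γ // s.length ≤ n} + 1 := by
  rw [indexN, Nat.card_congr (classEquiv Γ n), Finite.card_option]

lemma card_lower [Fintype Γ] (n : ℕ) :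
    Fintype.card Γ ^ n ≤ Nat.card {s : List Γ // s.length ≤ n} := by
  have hinj : Function.Injective
      (fun f : Fin n → Γ => (⟨List.ofFn f, by simp⟩ : {s : List Γ // s.length ≤ n})) := by
    intro f g h
    exact List.ofFn_inj.mp (congrArg Subtype.val h)
  calc Fintype.card Γ ^ n = Nat.card (Fin n → Γ) := by simp [Nat.card_eq_fintype_card]
  _ ≤ _ := Nat.card_le_card_of_injective _ hinj

lemma card_upper [Fintype Γ] [Nonempty Γ] (n : ℕ) :
    Nat.card {s : List Γ // s.length ≤ n} ≤ (n + 1) * Fintype.card Γ ^ n := by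
  obtain ⟨a₀⟩ := ‹Nonempty Γ›
  have hinj : Function.Injective
      (fun w : {s : List Γ // s.length ≤ n} =>
        ((⟨w.1.length, by omega⟩, fun i => w.1.getD i a₀) : Fin (n + 1) × (Fin n → Γ))) := by
    intro w1 w2 h
    have h1 : w1.1.length = w2.1.length := by
      have := congrArg (fun p : Fin (n + 1) × (Fin n → Γ) => (p.1 : ℕ)) h
      simpa using this
    have h2 : ∀ i : Fin n, w1.1.getD i a₀ = w2.1.getD i a₀ := fun i =>
      congrFun (congrArg Prod.snd h) i
    refine Subtype.ext (List.ext_getElem h1 fun i hi1 hi2 => ?_)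
    have hilt : i < n := lt_of_lt_of_le hi1 w1.2
    have h3 := h2 ⟨i, hilt⟩
    have e1 : w1.1.getD i a₀ = w1.1[i] := List.getD_eq_getElem w1.1 a₀ hi1
    have e2 : w2.1.getD i a₀ = w2.1[i] := List.getD_eq_getElem w2.1 a₀ hi2
    rw [show ((⟨i, hilt⟩ : Fin n) : ℕ) = i from rfl] at h3
    rw [e1, e2] at h3
    exact h3
  calc Nat.card {s : List Γ // s.length ≤ n}
      ≤ Nat.card (Fin (n + 1) × (Fin n → Γ)) := Nat.card_le_card_of_injective _ hinj
  _ = (n + 1) * Fintype.card Γ ^ n := by simp [Nat.card_eq_fintype_card]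

lemma aux_log_tendsto :
    Filter.Tendsto (fun n : ℕ => Real.logb 2 ((n : ℝ) + 2) / n) atTop (nhds 0) := by
  have h1 : (fun n : ℕ => Real.log ((n : ℝ) + 2)) =o[atTop] (fun n : ℕ => (n : ℝ) + 2) :=
    Real.isLittleO_log_id_atTop.comp_tendsto
      (Filter.tendsto_atTop_add_const_right _ 2 tendsto_natCast_atTop_atTop)
  have h2 : (fun n : ℕ => (n : ℝ) + 2) =O[atTop] (fun n : ℕ => (n : ℝ)) := by
    apply Asymptotics.IsBigO.of_bound 3
    filter_upwards [eventually_ge_atTop 1] with n hn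
    have : (1 : ℝ) ≤ n := by exact_mod_cast hn
    simp only [Real.norm_eq_abs]
    rw [abs_of_nonneg (by linarith), abs_of_nonneg (by linarith)]
    linarith
  have h3 := (h1.trans_isBigO h2).tendsto_div_nhds_zero
  have h4 := h3.div_const (Real.log 2)
  simp only [zero_div] at h4
  convert h4 using 2 with n
  rw [Real.logb, div_div, div_div]
  ring_nf

lemma entropy_tendsto [Fintype Γ] [Nonempty Γ] :
    Filter.Tendsto (fun n : ℕ => Real.logb 2 (indexN {w | IsDyck Γ w} n) / n) atTop
      (nhds (Real.logb 2 (Fintype.card Γ))) := by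
  set c := Fintype.card Γ with hc
  have hc1 : 1 ≤ c := Fintype.card_pos
  set L := Real.logb 2 (c : ℝ) with hLdef
  -- bounds on the index
  have hlow : ∀ n : ℕ, c ^ n ≤ indexN {w | IsDyck Γ w} n := by
    intro n
    rw [indexN_dyck]
    exact le_trans (card_lower (Γ := Γ) n) (Nat.le_succ _)
  have hhigh : ∀ n : ℕ, indexN {w | IsDyck Γ w} n ≤ (n + 2) * c ^ n := by
    intro n
    rw [indexN_dyck]
    have h1 := card_upper (Γ := Γ) n
    have h2 : 1 ≤ c ^ n := Nat.one_le_pow _ _ hc1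
    nlinarith
  apply tendsto_of_tendsto_of_tendsto_of_le_of_le' (g := fun _ : ℕ => L)
      (h := fun n : ℕ => Real.logb 2 ((n : ℝ) + 2) / n + L)
  · exact tendsto_const_nhds
  · have := aux_log_tendsto.add_const L
    simpa using this
  · -- lower bound
    filter_upwards [eventually_ge_atTop 1] with n hn
    have hnR : (0 : ℝ) < n := by exact_mod_cast hn
    rw [le_div_iff₀ hnR]
    have hcpow : (0 : ℝ) < (c : ℝ) ^ n := by positivity
    have hle : ((c : ℝ)) ^ n ≤ (indexN {w | IsDyck Γ w} n : ℝ) := by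
      exact_mod_cast hlow n
    calc L * n = Real.logb 2 ((c : ℝ) ^ n) := by rw [Real.logb_pow]; ring
    _ ≤ Real.logb 2 (indexN {w | IsDyck Γ w} n) :=
        Real.logb_le_logb_of_le one_lt_two hcpow hle
  · -- upper bound
    filter_upwards [eventually_ge_atTop 1] with n hn
    have hnR : (0 : ℝ) < n := by exact_mod_cast hn
    have hIpos : (0 : ℝ) < (indexN {w | IsDyck Γ w} n : ℝ) := by
      have h1 : 1 ≤ indexN {w | IsDyck Γ w} n :=
        le_trans (Nat.one_le_pow _ _ hc1) (hlow n)
      exact_mod_cast h1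
    have hIle : (indexN {w | IsDyck Γ w} n : ℝ) ≤ ((n : ℝ) + 2) * (c : ℝ) ^ n := by
      have := hhigh n
      push_cast
      exact_mod_cast this
    have key : Real.logb 2 (indexN {w | IsDyck Γ w} n) ≤
        Real.logb 2 ((n : ℝ) + 2) + n * L := by
      calc Real.logb 2 (indexN {w | IsDyck Γ w} n)
          ≤ Real.logb 2 (((n : ℝ) + 2) * (c : ℝ) ^ n) :=
            Real.logb_le_logb_of_le one_lt_two hIpos hIle
      _ = Real.logb 2 ((n : ℝ) + 2) + Real.logb 2 ((c : ℝ) ^ n) :=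
            Real.logb_mul (by positivity) (by positivity)
      _ = Real.logb 2 ((n : ℝ) + 2) + n * L := by rw [Real.logb_pow]
    calc Real.logb 2 (indexN {w | IsDyck Γ w} n) / n
        ≤ (Real.logb 2 ((n : ℝ) + 2) + n * L) / n := by gcongr
    _ = Real.logb 2 ((n : ℝ) + 2) / n + L := by
        rw [add_div]
        congr 1
        rw [mul_comm, mul_div_assoc, div_self (ne_of_gt hnR), mul_one]

end DyckAux

theorem entropy_dyck (Γ : Type*) [Fintype Γ] [Nonempty Γ] :
    entropy {w | IsDyck Γ w} = ENNReal.ofReal (Real.logb 2 (Fintype.card Γ)) ∧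
      ∀ n : ℕ, 1 ≤ n →
        indexN {w | IsDyck Γ w} n = Nat.card {w : List Γ // w.length ≤ n} + 1 := by
  letI : DecidableEq Γ := Classical.decEq Γ
  refine ⟨?_, fun n _ => DyckAux.indexN_dyck n⟩
  have h := DyckAux.entropy_tendsto (Γ := Γ)
  have h2 : Filter.Tendsto
      (fun n : ℕ => ENNReal.ofReal (Real.logb 2 (indexN {w | IsDyck Γ w} n) / n)) atTop
      (nhds (ENNReal.ofReal (Real.logb 2 (Fintype.card Γ)))) :=
    (ENNReal.continuous_ofReal.tendsto _).comp h
  rw [entropy]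
  exact h2.limsup_eq
end

section
/- The deterministic palindrome language DPali_Σ = {u#u^R | u ∈ Σ*} over Σ ∪ {#} has topological entropy η(DPali_Σ) = log₂|Σ|. -/
open Filter

/-- The deterministic palindrome language `{u # uᴿ}` over `Option Σ`, where `none`
plays the role of the marker `#`. -/
def DPali (α : Type*) : Set (List (Option α)) :=
  {w | ∃ u : List α, w = u.map some ++ none :: (u.reverse.map some)}

/-! Every word is `thetaN (DPali α) n`-equivalent to a word without positive witnesses
(here `##`), to a marker-free `u`, or to `v#`, whose only positive witness is `vᴿ`, with
`|u|, |v| ≤ n`; so `ind Θₙ ≤ 2(n+1)|Σ|ⁿ + 1`. Conversely the `|Σ|ⁿ` words `u#` with `|u| = n`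
are pairwise separated by the witnesses `uᴿ`. The polynomial factor disappears in
`log₂ (ind Θₙ) / n`. -/

open Function Real Topology

section MyhillNerode

variable {α : Type*} {L : Set (List α)} {n : ℕ}

theorem thetaN_equivalence_s8 : Equivalence (thetaN L n) where
  refl _ _ _ := Iff.rfl
  symm h w hw := (h w hw).symm
  trans h h' w hw := (h w hw).trans (h' w hw)

theorem surjective_quotMk_thetaN {β : Type*} (rep : β → List α)
    (h : ∀ x, ∃ b, thetaN L n (rep b) x) :
    Surjective fun b => Quot.mk (thetaN L n) (rep b) :=
  Quot.ind fun x => (h x).imp fun _ hb => Quot.sound hb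

theorem card_le_indexN [Finite (Quot (thetaN L n))] {β : Type*} (f : β → List α)
    (hf : ∀ a b, thetaN L n (f a) (f b) → a = b) : Nat.card β ≤ indexN L n :=
  Nat.card_le_card_of_injective (fun b => Quot.mk _ (f b)) fun a b hab =>
    hf a b (thetaN_equivalence_s8.eqvGen_iff.mp (Quot.eqvGen_exact hab))

end MyhillNerode

theorem List.natCard_length_le_le_mul_pow {α : Type*} [Finite α] [Nonempty α] (n : ℕ) :
    Nat.card {l : List α // l.length ≤ n} ≤ (n + 1) * Nat.card α ^ n := by
  obtain ⟨a⟩ := ‹Nonempty α›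
  have hinj : Injective fun l : {l : List α // l.length ≤ n} =>
      ((⟨l.1.length, by omega⟩ : Fin (n + 1)), fun i : Fin n => l.1.getD i a) := by
    rintro ⟨l, hl⟩ ⟨l', hl'⟩ h
    simp only [Prod.mk.injEq, Fin.mk.injEq] at h
    refine Subtype.ext (List.ext_getElem h.1 fun i hi hi' => ?_)
    simpa [List.getD_eq_getElem, hi, hi'] using congrFun h.2 ⟨i, hi.trans_le hl⟩
  simpa [Nat.card_prod, Nat.card_fun] using Nat.card_le_card_of_injective _ hinj

namespace DPali

variable {α : Type*}

theorem map_some_append_eq_map_some_append_none_cons {u v : List α}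
    {w z : List (Option α)} :
    u.map some ++ w = v.map some ++ none :: z ↔
      ∃ s, v = u ++ s ∧ w = s.map some ++ none :: z := by
  induction u generalizing v with
  | nil => simp
  | cons x xs ih =>
    cases v with
    | nil => simp
    | cons y ys => simp [ih, and_assoc, eq_comm]

theorem map_some_append_mem_iff (u : List α) (w : List (Option α)) :
    u.map some ++ w ∈ DPali α ↔
      ∃ s, w = s.map some ++ none :: (u ++ s).reverse.map some := by
  constructor
  · rintro ⟨v, hv⟩
    obtain ⟨s, rfl, hw⟩ := map_some_append_eq_map_some_append_none_cons.mp hv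
    exact ⟨s, hw⟩
  · rintro ⟨s, rfl⟩
    exact ⟨u ++ s, by simp⟩

theorem map_some_append_none_cons_mem_iff (u : List α) (z : List (Option α)) :
    u.map some ++ none :: z ∈ DPali α ↔ z = u.reverse.map some := by
  rw [map_some_append_mem_iff]
  constructor
  · rintro ⟨_ | ⟨a, s⟩, hs⟩
    · simpa using hs
    · simp at hs
  · rintro rfl
    exact ⟨[], by simp⟩

theorem length_lt_of_map_some_append_mem {u : List α} {w : List (Option α)}
    (h : u.map some ++ w ∈ DPali α) : u.length < w.length := by
  obtain ⟨s, rfl⟩ := (map_some_append_mem_iff u w).mp h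
  simp only [List.length_append, List.length_map, List.length_cons, List.length_reverse]
  omega

theorem none_none_append_not_mem (w : List (Option α)) : [none, none] ++ w ∉ DPali α := by
  simpa using map_some_append_none_cons_mem_iff [] (none :: w)

theorem exists_eq_map_some_or_eq_map_some_append_none_cons (x : List (Option α)) :
    (∃ u : List α, x = u.map some) ∨
      ∃ (u : List α) (t : List (Option α)), x = u.map some ++ none :: t := by
  induction x with
  | nil => exact .inl ⟨[], rfl⟩
  | cons a t ih =>
    rcases a with _ | a
    · exact .inr ⟨[], t, rfl⟩
    · rcases ih with ⟨u, rfl⟩ | ⟨u, t, rfl⟩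
      · exact .inl ⟨a :: u, rfl⟩
      · exact .inr ⟨a :: u, t, rfl⟩

def classRep (n : ℕ) :
    Option ({u : List α // u.length ≤ n} ⊕ {u : List α // u.length ≤ n}) → List (Option α)
  | none => [none, none]
  | some (.inl u) => u.1.map some
  | some (.inr u) => u.1.map some ++ [none]

theorem thetaN_classRep_none {n : ℕ} {x : List (Option α)}
    (hx : ∀ w : List (Option α), w.length ≤ n → x ++ w ∉ DPali α) :
    thetaN (DPali α) n (classRep n none) x :=
  fun w hw => iff_of_false (none_none_append_not_mem w) (hx w hw)

theorem exists_thetaN_classRep_map_some (n : ℕ) (u : List α) :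
    ∃ t, thetaN (DPali α) n (classRep n t) (u.map some) := by
  by_cases hu : u.length ≤ n
  · exact ⟨some (.inl ⟨u, hu⟩), thetaN_equivalence_s8.refl _⟩
  · refine ⟨none, thetaN_classRep_none fun w hw hmem => hu ?_⟩
    have := length_lt_of_map_some_append_mem hmem
    omega

theorem exists_thetaN_classRep_map_some_append_none_cons (n : ℕ) (u : List α)
    (t : List (Option α)) :
    ∃ c, thetaN (DPali α) n (classRep n c) (u.map some ++ none :: t) := by
  have hmem (w) : u.map some ++ none :: t ++ w ∈ DPali α ↔ t ++ w = u.reverse.map some := by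
    rw [List.append_assoc, List.cons_append, map_some_append_none_cons_mem_iff]
  by_cases hpre : ∃ r : List α, t ++ r.map some = u.reverse.map some
  · obtain ⟨r, hr⟩ := hpre
    have hwit (w) : u.map some ++ none :: t ++ w ∈ DPali α ↔ w = r.map some := by
      rw [hmem, ← hr, List.append_cancel_left_eq]
    by_cases hlen : r.length ≤ n
    · refine ⟨some (.inr ⟨r.reverse, by simpa using hlen⟩), fun w _ => ?_⟩
      rw [hwit, classRep, List.append_assoc, List.singleton_append,
        map_some_append_none_cons_mem_iff, List.reverse_reverse]
    · refine ⟨none, thetaN_classRep_none fun w hw hw' => hlen ?_⟩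
      rw [hwit] at hw'
      simpa [hw'] using hw
  · refine ⟨none, thetaN_classRep_none fun w _ hw => hpre ?_⟩
    obtain ⟨-, r, -, -, hr⟩ := List.map_eq_append_iff.mp ((hmem w).mp hw).symm
    exact ⟨r, by rw [hr, (hmem w).mp hw]⟩

theorem surjective_quotMk_classRep (n : ℕ) :
    Surjective fun c => Quot.mk (thetaN (DPali α) n) (classRep n c) :=
  surjective_quotMk_thetaN _ fun x => by
    rcases exists_eq_map_some_or_eq_map_some_append_none_cons x with ⟨u, rfl⟩ | ⟨u, t, rfl⟩
    · exact exists_thetaN_classRep_map_some n u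
    · exact exists_thetaN_classRep_map_some_append_none_cons n u t

variable [Finite α]

instance (n : ℕ) : Finite {u : List α // u.length ≤ n} :=
  (List.finite_length_le α n).to_subtype

instance (n : ℕ) : Finite (Quot (thetaN (DPali α) n)) :=
  .of_surjective _ (surjective_quotMk_classRep n)

theorem indexN_le (n : ℕ) :
    indexN (DPali α) n ≤ 2 * Nat.card {u : List α // u.length ≤ n} + 1 := by
  have := Nat.card_le_card_of_surjective _ (surjective_quotMk_classRep (α := α) n)
  rw [Finite.card_option, Nat.card_sum] at this
  rw [indexN]
  omega

theorem pow_card_le_indexN (n : ℕ) : Nat.card α ^ n ≤ indexN (DPali α) n := by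
  rw [← Nat.card_fin n, ← Nat.card_fun]
  refine card_le_indexN (fun u : Fin n → α => (List.ofFn u).map some ++ [none]) fun a b hab => ?_
  have hwit (u : Fin n → α) (w) : (List.ofFn u).map some ++ [none] ++ w ∈ DPali α ↔
      w = (List.ofFn u).reverse.map some := by
    rw [List.append_assoc, List.singleton_append, map_some_append_none_cons_mem_iff]
  have := (hwit b _).mp ((hab _ (by simp)).mp ((hwit a _).mpr rfl))
  exact List.ofFn_injective <| List.reverse_injective <|
    List.map_injective_iff.mpr (Option.some_injective α) this

theorem indexN_le_mul_pow [Nonempty α] (n : ℕ) :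
    indexN (DPali α) n ≤ (3 * n + 3) * Nat.card α ^ n := by
  have hclasses := indexN_le (α := α) n
  have hlists := List.natCard_length_le_le_mul_pow (α := α) n
  have hpow : 1 ≤ Nat.card α ^ n := Nat.one_le_pow _ _ Nat.card_pos
  nlinarith

end DPali

theorem Real.tendsto_logb_div_of_pow_le_of_le_mul_pow {a c : ℕ → ℝ} {b k : ℝ} (hb : 1 < b)
    (hk : 0 < k) (hc : ∀ n, 0 < c n) (hlow : ∀ n, k ^ n ≤ a n) (hup : ∀ n, a n ≤ c n * k ^ n)
    (hc_lim : Tendsto (fun n => logb b (c n) / n) atTop (𝓝 0)) :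
    Tendsto (fun n => logb b (a n) / n) atTop (𝓝 (logb b k)) := by
  refine tendsto_of_tendsto_of_tendsto_of_le_of_le' tendsto_const_nhds
    (by simpa using hc_lim.add_const (logb b k)) ?_ ?_ <;>
    filter_upwards [eventually_gt_atTop 0] with n hn <;>
    have hn' : (0 : ℝ) < n := Nat.cast_pos.mpr hn
  · calc logb b k = logb b (k ^ n) / n := by rw [logb_pow]; field_simp
      _ ≤ logb b (a n) / n := by gcongr; exact hlow n
  · calc logb b (a n) / n ≤ logb b (c n * k ^ n) / n := by
          gcongr
          exacts [(pow_pos hk n).trans_le (hlow n), hup n]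
      _ = logb b (c n) / n + logb b k := by
          rw [logb_mul (hc n).ne' (pow_pos hk n).ne', logb_pow]; field_simp

theorem Real.tendsto_logb_three_mul_add_three_div {b : ℝ} :
    Tendsto (fun n : ℕ => logb b (3 * n + 3) / n) atTop (𝓝 0) := by
  have h := (tendsto_pow_logb_div_mul_add_atTop (b := b) (1 / 3) (-1) 1 (by norm_num)).comp
    (tendsto_atTop_add_const_right _ 3 (tendsto_natCast_atTop_atTop.const_mul_atTop three_pos))
  refine h.congr fun n => ?_
  simp only [comp_apply, pow_one]
  ring_nf

theorem entropy_dpali (α : Type*) [Fintype α] (h : 2 ≤ Fintype.card α) :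
    entropy (DPali α) = ENNReal.ofReal (Real.logb 2 (Fintype.card α)) := by
  have : Nonempty α := Fintype.card_pos_iff.mp (by omega)
  rw [← Nat.card_eq_fintype_card]
  refine (ENNReal.tendsto_ofReal (Real.tendsto_logb_div_of_pow_le_of_le_mul_pow one_lt_two
    (c := fun n => 3 * n + 3) (Nat.cast_pos.mpr Nat.card_pos) (fun n => by positivity) (fun n => ?_)
    (fun n => ?_) Real.tendsto_logb_three_mul_add_three_div)).limsup_eq
  · exact_mod_cast DPali.pow_card_le_indexN n
  · exact_mod_cast DPali.indexN_le_mul_pow n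
end

section
/- The entropy function η: P(Σ*) → [0,∞] is surjective for every alphabet Σ with at least two letters: for every x ∈ [0,∞] there exists a language L ⊆ Σ* with η(L) = x. -/
open Filter

/-!
A word of length `2 ^ ν + ν` is a data block followed by an address of length `ν`; the block
language accepts it iff the address is below `k` and the data carries an `a` there. At `n = ν`
the `2 ^ k` data blocks are pairwise separated by the addresses, so `log₂ (indexN L ν) ≥ k`,
and `k = ⌈r ν⌉` gives entropy at least `r` (`k = 2 ^ ν` gives `∞`).

For the upper bound the admissible `ν` grow like a tower, so a prefix longer than `log₂ n` is
within distance `n` of at most one block length. Its behaviour on extensions of length `≤ n` is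
then fixed by that distance, possibly the block index, and at most `⌈r n⌉` bits: once `j`
letters of the address are read, the reachable data positions form a progression of stride
`2 ^ j`, and `⌈r ν⌉ ≤ 2 ^ (ν - d) ⌈r n⌉`. Shorter prefixes are only polynomially many,
so `indexN L n ≤ C n ^ c 2 ^ ⌈r n⌉`.
-/

namespace EntropySurjective

open Finset Topology

variable {α : Type*}

section Binary

variable [DecidableEq α] (a : α)

def bin (w : List α) : ℕ :=
  Nat.ofDigits 2 (w.map fun c => if c = a then 1 else 0)

@[simp]
theorem bin_nil : bin a [] = 0 := rfl

theorem bin_append (u v : List α) : bin a (u ++ v) = bin a u + 2 ^ u.length * bin a v := by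
  simp [bin, Nat.ofDigits_append]

theorem exists_bin_eq {b : α} (hb : b ≠ a) {s t : ℕ} (ht : t < 2 ^ s) :
    ∃ w : List α, w.length = s ∧ bin a w = t := by
  induction s generalizing t with
  | zero => exact ⟨[], rfl, by simp_all⟩
  | succ s ih =>
    obtain ⟨w, hw, hwt⟩ := ih (t := t / 2) (by rw [pow_succ] at ht; omega)
    refine ⟨(if t % 2 = 1 then a else b) :: w, by simp [hw], ?_⟩
    have := bin_append a [if t % 2 = 1 then a else b] w
    split_ifs at this ⊢ with h <;> simp_all [bin] <;> omega

end Binary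

section MyhillNerode

variable {L : Set (List α)} {n : ℕ}

instance [Finite α] (m : ℕ) : Finite {z : List α // z.length ≤ m} :=
  (List.finite_length_le α m).to_subtype

theorem card_length_le_le [Fintype α] (m : ℕ) :
    Nat.card {z : List α // z.length ≤ m} ≤ (Fintype.card α + 1) ^ (m + 1) := by
  calc Nat.card {z : List α // z.length ≤ m}
      ≤ Nat.card (Fin (m + 1) → Option α) := by
        refine Nat.card_le_card_of_injective (fun z j => z.1[(j : ℕ)]?) fun z z' h => ?_
        refine Subtype.ext (List.ext_getElem? fun j => ?_)
        by_cases hj : j ≤ m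
        · exact congrFun h ⟨j, by omega⟩
        · rw [List.getElem?_eq_none (by omega), List.getElem?_eq_none (by omega)]
    _ = (Fintype.card α + 1) ^ (m + 1) := by simp [Nat.card_eq_fintype_card]

def residual (L : Set (List α)) (n : ℕ) :
    Quot (thetaN L n) → {w : List α // w.length ≤ n} → Prop :=
  Quot.lift (fun u w => u ++ w.1 ∈ L) fun _ _ h => funext fun w => propext (h w.1 w.2)

theorem residual_injective : Function.Injective (residual L n) := by
  rintro ⟨u⟩ ⟨v⟩ h
  exact Quot.sound fun w hw => iff_of_eq (congrFun h ⟨w, hw⟩)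

instance [Finite α] : Finite (Quot (thetaN L n)) :=
  Finite.of_injective _ residual_injective

theorem indexN_pos [Finite α] : 0 < indexN L n :=
  have : Nonempty (Quot (thetaN L n)) := ⟨Quot.mk _ []⟩
  Nat.card_pos

theorem card_le_indexN [Finite α] {P : Type*} (g : P → List α)
    (hg : Pairwise fun p q => ∃ w, w.length ≤ n ∧ ¬(g p ++ w ∈ L ↔ g q ++ w ∈ L)) :
    Nat.card P ≤ indexN L n := by
  refine Nat.card_le_card_of_injective (fun p => Quot.mk _ (g p)) fun p q hpq => ?_
  by_contra hne
  obtain ⟨w, hw, hsep⟩ := hg hne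
  exact hsep (iff_of_eq (congrFun (congrArg (residual L n) hpq) ⟨w, hw⟩))

theorem indexN_le_card {P : Type*} [Finite P] (Φ : P → List α → Prop)
    (h : ∀ z, ∃ p, ∀ w : List α, w.length ≤ n → (z ++ w ∈ L ↔ Φ p w)) :
    indexN L n ≤ Nat.card P := by
  choose code hcode using h
  refine Nat.card_le_card_of_injective (fun q => code q.out) fun q q' hqq' => ?_
  rw [← Quot.out_eq q, ← Quot.out_eq q']
  exact Quot.sound fun w hw => by
    rw [hcode _ w hw, hcode _ w hw, show code q.out = code q'.out from hqq']

end MyhillNerode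

section Asymptotics

theorem tendsto_logb_div_atTop : Tendsto (fun n : ℕ => Real.logb 2 n / n) atTop (𝓝 0) := by
  have h := (Real.tendsto_pow_log_div_mul_add_atTop 1 0 1 one_ne_zero).comp
    tendsto_natCast_atTop_atTop
  simpa [Real.logb, div_right_comm] using h.div_const (Real.log 2)

theorem le_logb_of_two_pow_le {m N : ℕ} (h : 2 ^ m ≤ N) : (m : ℝ) ≤ Real.logb 2 N := by
  have hN : (2 : ℝ) ^ m ≤ N := by exact_mod_cast h
  rw [Real.le_logb_iff_rpow_le one_lt_two (lt_of_lt_of_le (by positivity) hN)]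
  simpa using hN

theorem eventually_mul_le_two_pow (C : ℝ) : ∀ᶠ m : ℕ in atTop, C * m ≤ 2 ^ m := by
  have h := (tendsto_pow_const_div_const_pow_of_one_lt 1 one_lt_two).eventually
    (gt_mem_nhds (show (0 : ℝ) < 1 / (|C| + 1) by positivity))
  filter_upwards [h] with m hm
  rw [pow_one, div_lt_div_iff₀ (by positivity) (by positivity), one_mul] at hm
  nlinarith [le_abs_self C, (Nat.cast_nonneg m : (0 : ℝ) ≤ m)]

theorem entropy_le_ofReal {L : Set (List α)} {r : ℝ} {f : ℕ → ℝ}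
    (hf : Tendsto (fun n => f n / n) atTop (𝓝 0))
    (h : ∀ᶠ n in atTop, Real.logb 2 (indexN L n) ≤ r * n + f n) :
    entropy L ≤ ENNReal.ofReal r := by
  have hlim : Tendsto (fun n : ℕ => ENNReal.ofReal (r + f n / n)) atTop
      (𝓝 (ENNReal.ofReal r)) :=
    ENNReal.tendsto_ofReal (by simpa using hf.const_add r)
  refine (limsup_le_limsup ?_).trans hlim.limsup_eq.le
  filter_upwards [h, eventually_gt_atTop 0] with n hn hpos
  refine ENNReal.ofReal_le_ofReal ?_
  rw [div_le_iff₀ (by positivity), add_mul, div_mul_cancel₀ _ (by positivity)]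
  linarith

theorem entropy_le_ofReal_of_indexN_le [Finite α] {L : Set (List α)} {r : ℝ} (hr : 0 ≤ r)
    {C c : ℕ} (h : ∀ᶠ n in atTop, indexN L n ≤ C * n ^ c * 2 ^ ⌈r * n⌉₊) :
    entropy L ≤ ENNReal.ofReal r := by
  refine entropy_le_ofReal (f := fun n => Real.logb 2 C + c * Real.logb 2 n + 1) ?_ ?_
  · have := ((tendsto_const_div_atTop_nhds_zero_nat (Real.logb 2 C)).add
      (tendsto_logb_div_atTop.const_mul (c : ℝ))).add (tendsto_const_div_atTop_nhds_zero_nat 1)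
    simpa [add_div, mul_div_assoc] using this
  filter_upwards [h, eventually_ge_atTop 1] with n hn hn1
  have hC : C ≠ 0 := by
    rintro rfl
    exact (indexN_pos (L := L) (n := n)).ne' (by simpa using hn)
  calc Real.logb 2 (indexN L n)
      ≤ Real.logb 2 (C * n ^ c * 2 ^ ⌈r * n⌉₊ : ℕ) :=
        Real.logb_le_logb_of_le one_lt_two (by exact_mod_cast indexN_pos) (by exact_mod_cast hn)
    _ = Real.logb 2 C + c * Real.logb 2 n + ⌈r * n⌉₊ := by
        push_cast
        rw [Real.logb_mul (by positivity) (by positivity), Real.logb_mul (by positivity)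
          (by positivity), Real.logb_pow, Real.logb_pow, Real.logb_self_eq_one one_lt_two, mul_one]
    _ ≤ r * n + (Real.logb 2 C + c * Real.logb 2 n + 1) := by
        linarith [Nat.ceil_lt_add_one (by positivity : 0 ≤ r * n)]

end Asymptotics

def tower : ℕ → ℕ
  | 0 => 0
  | i + 1 => 2 ^ tower i + tower i

theorem tower_strictMono : StrictMono tower :=
  strictMono_nat_of_lt_succ fun i => by simp [tower]

theorem two_pow_le_of_tower_gap {i j ℓ n : ℕ} (hji : j < i) (hj : ℓ ≤ tower (j + 1))
    (hi : tower (i + 1) ≤ ℓ + n) : 2 ^ ℓ ≤ n := by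
  have hgap : 2 ^ tower (j + 1) + tower (j + 1) ≤ tower (i + 1) :=
    tower_strictMono.monotone (by omega : j + 2 ≤ i + 1)
  have hℓ : 2 ^ ℓ ≤ 2 ^ tower (j + 1) := Nat.pow_le_pow_right two_pos hj
  omega

theorem block_eq_of_lt_two_pow {i j ℓ n : ℕ} (hlong : n < 2 ^ ℓ)
    (hi : ℓ ≤ tower (i + 1)) (hi' : tower (i + 1) ≤ ℓ + n)
    (hj : ℓ ≤ tower (j + 1)) (hj' : tower (j + 1) ≤ ℓ + n) : j = i := by
  rcases lt_trichotomy j i with h | h | h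
  · exact absurd (two_pow_le_of_tower_gap h hj hi') hlong.not_ge
  · exact h
  · exact absurd (two_pow_le_of_tower_gap h hi hj') hlong.not_ge

section BlockLanguage

variable [DecidableEq α] (a : α) (k : ℕ → ℕ)

def Accepts (i : ℕ) (y : List α) : Prop :=
  bin a (y.drop (2 ^ tower i)) < k i ∧ y[bin a (y.drop (2 ^ tower i))]? = some a

/-- A variant of the paper's language `{uv | f(v) ∈ φ(u)}`: the data block `u` has length
`2 ^ ν`, `φ(u)` is the set of positions below `k` at which `u` carries an `a`, the address `v`
has length `ν` and `f(v) = bin a v`; only the sparse lengths `ν = tower i` are used. -/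
def blockLang : Set (List α) :=
  {y | ∃ i, y.length = tower (i + 1) ∧ Accepts a k i y}

/-- The data position read when the address part of `z` is completed by a word of value `t`. -/
def dataIndex (i : ℕ) (z : List α) (t : ℕ) : ℕ :=
  bin a (z.drop (2 ^ tower i)) + 2 ^ (z.length - 2 ^ tower i) * t

def DataAccepts (i d : ℕ) (S : Finset ℕ) (w : List α) : Prop :=
  let j := bin a (w.drop (d - tower i))
  j < k i ∧ if j < tower (i + 1) - d then j ∈ S else w[j - (tower (i + 1) - d)]? = some a

variable {a k} {n : ℕ} {z w : List α}

theorem mem_blockLang_iff {i : ℕ} {y : List α} (hy : y.length = tower (i + 1)) :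
    y ∈ blockLang a k ↔ Accepts a k i y := by
  refine ⟨fun ⟨j, hj, hacc⟩ => ?_, fun h => ⟨i, hy, h⟩⟩
  obtain rfl : j = i := Nat.succ_injective (tower_strictMono.injective (hj.symm.trans hy))
  exact hacc

theorem accepts_append_of_le {i : ℕ} (hk : k i ≤ 2 ^ tower i) (hz : 2 ^ tower i ≤ z.length) :
    Accepts a k i (z ++ w) ↔
      dataIndex a i z (bin a w) < k i ∧ z[dataIndex a i z (bin a w)]? = some a := by
  rw [Accepts, List.drop_append_of_le_length hz, bin_append, List.length_drop, ← dataIndex]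
  refine and_congr_right fun hlt => ?_
  rw [List.getElem?_append_left (by omega)]

theorem accepts_append_of_lt {i : ℕ} (hz : z.length < 2 ^ tower i) :
    Accepts a k i (z ++ w) ↔
      bin a (w.drop (2 ^ tower i - z.length)) < k i ∧
        (z ++ w)[bin a (w.drop (2 ^ tower i - z.length))]? = some a := by
  rw [Accepts, List.drop_append, List.drop_eq_nil_of_le hz.le, List.nil_append]

theorem two_pow_le_indexN [Finite α] {b : α} (hb : b ≠ a) {i : ℕ} (hk : k i ≤ 2 ^ tower i) :
    2 ^ k i ≤ indexN (blockLang a k) (tower i) := by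
  let data (S : (range (k i)).powerset) : List α :=
    List.ofFn fun q : Fin (2 ^ tower i) => if (q : ℕ) ∈ S.1 then a else b
  have hdata (S) : (data S).length = 2 ^ tower i := List.length_ofFn
  have hcard : Nat.card (range (k i)).powerset = 2 ^ k i := by
    rw [Nat.card_eq_fintype_card, Fintype.card_coe, card_powerset, card_range]
  rw [← hcard]
  refine card_le_indexN data fun S T hST => ?_
  obtain ⟨q, hq⟩ : ∃ q, ¬(q ∈ S.1 ↔ q ∈ T.1) := by
    by_contra! h
    exact hST (Subtype.ext (Finset.ext h))
  have hqk : q < k i := by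
    by_cases hqS : q ∈ S.1
    · exact mem_range.1 (mem_powerset.1 S.2 hqS)
    · exact mem_range.1 (mem_powerset.1 T.2 (by tauto))
  obtain ⟨w, hw, hwq⟩ := exists_bin_eq a hb (hqk.trans_le hk)
  have key (S) : data S ++ w ∈ blockLang a k ↔ q ∈ S.1 := by
    rw [mem_blockLang_iff (i := i) (by simp [hdata, hw, tower]),
      accepts_append_of_le hk (hdata S).ge, dataIndex, List.drop_eq_nil_of_le (hdata S).le,
      hdata, Nat.sub_self]
    simp [hwq, data, hqk, hqk.trans_le hk, hb]
  exact ⟨w, hw.le, fun h => hq ((key S).symm.trans (h.trans (key T)))⟩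

theorem append_mem_blockLang_iff {i : ℕ} (hlong : n < 2 ^ z.length)
    (hi : z.length ≤ tower (i + 1)) (hi' : tower (i + 1) ≤ z.length + n) (hw : w.length ≤ n) :
    z ++ w ∈ blockLang a k ↔
      z.length + w.length = tower (i + 1) ∧ Accepts a k i (z ++ w) := by
  refine ⟨fun ⟨j, hj, hacc⟩ => ?_, fun ⟨h, hacc⟩ => ⟨i, by simpa using h, hacc⟩⟩
  rw [List.length_append] at hj
  have hji : j = i := block_eq_of_lt_two_pow hlong hi hi' (by omega) (by omega)
  subst hji
  exact ⟨hj, hacc⟩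

theorem append_notMem_blockLang
    (hnone : ∀ i, z.length ≤ tower (i + 1) → z.length + n < tower (i + 1))
    (hw : w.length ≤ n) :
    z ++ w ∉ blockLang a k := by
  rintro ⟨i, hi, -⟩
  rw [List.length_append] at hi
  have := hnone i (by omega)
  omega

end BlockLanguage

section UpperBound

theorem le_two_pow_sub_mul {m d n : ℕ} (hd : d ≤ n) (hn : 1 ≤ n) : m ≤ 2 ^ (m - d) * n :=
  calc m ≤ (m - d) + n := by omega
    _ ≤ (m - d + 1) * n := by nlinarith
    _ ≤ 2 ^ (m - d) * n := Nat.mul_le_mul_right _ Nat.lt_two_pow_self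

theorem ceil_mul_le_two_pow_sub_mul {r : ℝ} (hr : 0 ≤ r) {d n : ℕ} (hd : d ≤ n)
    (hn : 1 ≤ n) (m : ℕ) : ⌈r * m⌉₊ ≤ 2 ^ (m - d) * ⌈r * n⌉₊ := by
  refine Nat.ceil_le.2 ?_
  have hm : (m : ℝ) ≤ 2 ^ (m - d) * n := by exact_mod_cast le_two_pow_sub_mul hd hn
  push_cast
  calc r * m ≤ r * (2 ^ (m - d) * n) := by gcongr
    _ = 2 ^ (m - d) * (r * n) := by ring
    _ ≤ 2 ^ (m - d) * ⌈r * n⌉₊ := by gcongr; exact Nat.le_ceil _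

theorem succ_pow_log_le (q : ℕ) {n : ℕ} (hn : n ≠ 0) : (q + 1) ^ Nat.log 2 n ≤ n ^ q :=
  calc (q + 1) ^ Nat.log 2 n ≤ (2 ^ q) ^ Nat.log 2 n := Nat.pow_le_pow_left Nat.lt_two_pow_self _
    _ = (2 ^ Nat.log 2 n) ^ q := by rw [← pow_mul, ← pow_mul, mul_comm]
    _ ≤ n ^ q := Nat.pow_le_pow_left (Nat.pow_log_le_self 2 hn) _

theorem succ_pow_log_add_le {q n : ℕ} (hn : 1 ≤ n) (m : ℕ) :
    (q + 1) ^ (Nat.log 2 n + 1) + (n + 1) * (n + 2) * 2 ^ m ≤ (q + 7) * n ^ (q + 2) * 2 ^ m := by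
  have h1 := succ_pow_log_le q (n := n) (by omega)
  have h2 : 1 ≤ 2 ^ m := Nat.one_le_two_pow
  have h3 : 1 ≤ n ^ q := Nat.one_le_pow _ _ hn
  have h4 : (n + 1) * (n + 2) ≤ 6 * n ^ 2 := by nlinarith
  rw [pow_succ, pow_add]
  nlinarith [Nat.mul_le_mul h1 (Nat.mul_le_mul h2 (Nat.one_le_pow 2 n hn)),
    Nat.mul_le_mul h4 (Nat.mul_le_mul_right (2 ^ m) h3)]

/-- A prefix `z` of length at most `log₂ n` is kept as it is. A longer one is within distance
`n` of at most one block length; it is coded by that distance `d`, by the block index when `z`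
ends inside the data block, and by a set of fewer than `c` positions. -/
abbrev Code (α : Type*) (n c : ℕ) : Type _ :=
  {z : List α // z.length ≤ Nat.log 2 n} ⊕
    (Fin (n + 1) × Option (Fin (n + 1)) × (range c).powerset)

theorem card_code_le [Fintype α] (n c : ℕ) :
    Nat.card (Code α n c) ≤
      (Fintype.card α + 1) ^ (Nat.log 2 n + 1) + (n + 1) * (n + 2) * 2 ^ c := by
  rw [Nat.card_sum]
  refine Nat.add_le_add (card_length_le_le _) (le_of_eq ?_)
  rw [Nat.card_eq_fintype_card, Fintype.card_prod, Fintype.card_prod, Fintype.card_option,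
    Fintype.card_fin, Fintype.card_coe, card_powerset, card_range, mul_assoc]

variable [DecidableEq α] {a : α} {k : ℕ → ℕ} {n : ℕ} {r : ℝ} {z : List α}

variable (a k) in
def decode {c : ℕ} : Code α n c → List α → Prop
  | .inl z, w => z.1 ++ w ∈ blockLang a k
  | .inr (d, none, S), w => w.length = d ∧ bin a w ∈ S.1
  | .inr (d, some i, S), w => w.length = d ∧ DataAccepts a k i d S.1 w

theorem exists_address_code (hk : ∀ i, k i ≤ 2 ^ tower i)
    (hkr : ∀ i, k i ≤ ⌈r * tower i⌉₊) (hr : 0 ≤ r) (hn : 1 ≤ n) {i : ℕ}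
    (hz : 2 ^ tower i ≤ z.length) (hi' : tower (i + 1) ≤ z.length + n) :
    ∃ S : (range ⌈r * n⌉₊).powerset, ∀ w : List α,
      z.length + w.length = tower (i + 1) → (Accepts a k i (z ++ w) ↔ bin a w ∈ S.1) := by
  let S := (range ⌈r * n⌉₊).filter fun t =>
    dataIndex a i z t < k i ∧ z[dataIndex a i z t]? = some a
  refine ⟨⟨S, mem_powerset.2 (filter_subset _ _)⟩, fun w hw => ?_⟩
  rw [accepts_append_of_le (hk i) hz]
  simp only [S, mem_filter, mem_range, iff_and_self]
  rintro ⟨hlt, -⟩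
  have hT : tower (i + 1) = 2 ^ tower i + tower i := rfl
  have hcap := ceil_mul_le_two_pow_sub_mul hr (d := w.length) (by omega) hn (tower i)
  rw [show tower i - w.length = z.length - 2 ^ tower i by omega] at hcap
  refine Nat.lt_of_mul_lt_mul_left (a := 2 ^ (z.length - 2 ^ tower i)) ?_
  calc _ ≤ dataIndex a i z (bin a w) := Nat.le_add_left _ _
    _ < k i := hlt
    _ ≤ _ := (hkr i).trans hcap

theorem exists_data_code (hkr : ∀ i, k i ≤ ⌈r * tower i⌉₊) (hr : 0 ≤ r) {i : ℕ}
    (hz : z.length < 2 ^ tower i) (hi' : tower (i + 1) ≤ z.length + n) :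
    ∃ S : (range ⌈r * n⌉₊).powerset, ∀ w : List α,
      (Accepts a k i (z ++ w) ↔ DataAccepts a k i (tower (i + 1) - z.length) S.1 w) := by
  let S := (range ⌈r * n⌉₊).filter fun t => z[t]? = some a
  refine ⟨⟨S, mem_powerset.2 (filter_subset _ _)⟩, fun w => ?_⟩
  have hT : tower (i + 1) = 2 ^ tower i + tower i := rfl
  rw [accepts_append_of_lt hz, DataAccepts,
    show tower (i + 1) - z.length - tower i = 2 ^ tower i - z.length by omega,
    show tower (i + 1) - (tower (i + 1) - z.length) = z.length by omega]
  refine and_congr_right fun hj => ?_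
  have hcap : k i ≤ ⌈r * n⌉₊ := (hkr i).trans (Nat.ceil_mono (by gcongr; omega))
  rw [List.getElem?_append]
  split_ifs <;> simp [S, hj.trans_le hcap]

theorem exists_code (hk : ∀ i, k i ≤ 2 ^ tower i) (hkr : ∀ i, k i ≤ ⌈r * tower i⌉₊)
    (hr : 0 ≤ r) (hn : 1 ≤ n) (z : List α) :
    ∃ p : Code α n ⌈r * n⌉₊, ∀ w : List α, w.length ≤ n →
      (z ++ w ∈ blockLang a k ↔ decode a k p w) := by
  by_cases hshort : z.length ≤ Nat.log 2 n
  · exact ⟨.inl ⟨z, hshort⟩, fun w _ => Iff.rfl⟩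
  have hlong : n < 2 ^ z.length := Nat.lt_pow_of_log_lt one_lt_two (not_le.1 hshort)
  by_cases hact : ∃ i, z.length ≤ tower (i + 1) ∧ tower (i + 1) ≤ z.length + n
  swap
  · push Not at hact
    refine ⟨.inr (0, none, ⟨∅, empty_mem_powerset _⟩), fun w hw => ?_⟩
    simp [decode, append_notMem_blockLang hact hw]
  obtain ⟨i, hi, hi'⟩ := hact
  have hT : tower (i + 1) = 2 ^ tower i + tower i := rfl
  have hd : tower (i + 1) - z.length < n + 1 := by omega
  by_cases hz : 2 ^ tower i ≤ z.length
  · obtain ⟨S, hS⟩ := exists_address_code hk hkr hr hn hz hi'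
    refine ⟨.inr (⟨_, hd⟩, none, S), fun w hw => ?_⟩
    rw [append_mem_blockLang_iff hlong hi hi' hw]
    constructor
    · rintro ⟨hlen, hacc⟩
      exact ⟨by simp; omega, (hS w hlen).1 hacc⟩
    · rintro ⟨hlen, hmem⟩
      have hlen' : z.length + w.length = tower (i + 1) := by simp at hlen; omega
      exact ⟨hlen', (hS w hlen').2 hmem⟩
  · obtain ⟨S, hS⟩ := exists_data_code (a := a) hkr hr (not_le.1 hz) hi'
    have hin : i < n + 1 := by have := tower_strictMono.le_apply (x := i); omega
    refine ⟨.inr (⟨_, hd⟩, some ⟨i, hin⟩, S), fun w hw => ?_⟩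
    rw [append_mem_blockLang_iff hlong hi hi' hw, hS]
    constructor
    · rintro ⟨hlen, hacc⟩
      exact ⟨by simp; omega, hacc⟩
    · rintro ⟨hlen, hacc⟩
      exact ⟨by simp at hlen; omega, hacc⟩

theorem indexN_blockLang_le [Fintype α] (hk : ∀ i, k i ≤ 2 ^ tower i)
    (hkr : ∀ i, k i ≤ ⌈r * tower i⌉₊) (hr : 0 ≤ r) (hn : 1 ≤ n) :
    indexN (blockLang a k) n ≤
      (Fintype.card α + 7) * n ^ (Fintype.card α + 2) * 2 ^ ⌈r * n⌉₊ :=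
  calc indexN (blockLang a k) n ≤ Nat.card (Code α n ⌈r * n⌉₊) :=
        indexN_le_card (decode a k) (exists_code hk hkr hr hn)
    _ ≤ _ := card_code_le n _
    _ ≤ _ := succ_pow_log_add_le hn _

end UpperBound

section Entropy

variable [DecidableEq α] {a b : α} {r : ℝ}

theorem entropy_blockLang_two_pow [Finite α] (hb : b ≠ a) :
    entropy (blockLang a fun i => 2 ^ tower i) = ⊤ := by
  refine ENNReal.eq_top_of_forall_nnreal_le fun C => le_limsup_of_frequently_le ?_
  refine tower_strictMono.tendsto_atTop.frequently (Eventually.frequently ?_)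
  filter_upwards [tower_strictMono.tendsto_atTop.eventually (eventually_mul_le_two_pow C),
    tower_strictMono.tendsto_atTop.eventually (eventually_gt_atTop 0)] with i hC hpos
  have hlog := le_logb_of_two_pow_le
    (two_pow_le_indexN hb (k := fun i => 2 ^ tower i) (i := i) le_rfl)
  rw [← ENNReal.ofReal_coe_nnreal]
  refine ENNReal.ofReal_le_ofReal ((le_div_iff₀ (by exact_mod_cast hpos)).2 ?_)
  push_cast at hlog
  linarith

variable (r) in
noncomputable def ceilK (i : ℕ) : ℕ := min ⌈r * tower i⌉₊ (2 ^ tower i)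

theorem ofReal_le_entropy_blockLang [Finite α] (hb : b ≠ a) :
    ENNReal.ofReal r ≤ entropy (blockLang a (ceilK r)) := by
  refine le_limsup_of_frequently_le ?_
  refine tower_strictMono.tendsto_atTop.frequently (Eventually.frequently ?_)
  filter_upwards [tower_strictMono.tendsto_atTop.eventually (eventually_mul_le_two_pow r),
    tower_strictMono.tendsto_atTop.eventually (eventually_gt_atTop 0)] with i hr hpos
  have hlog := le_logb_of_two_pow_le (two_pow_le_indexN hb (k := ceilK r) (i := i)
    (min_le_right _ _))
  rw [ceilK, min_eq_left (Nat.ceil_le.2 (by exact_mod_cast hr))] at hlog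
  refine ENNReal.ofReal_le_ofReal ((le_div_iff₀ (by exact_mod_cast hpos)).2 ?_)
  exact (Nat.le_ceil _).trans hlog

theorem entropy_blockLang_ceilK [Fintype α] (hb : b ≠ a) (hr : 0 ≤ r) :
    entropy (blockLang a (ceilK r)) = ENNReal.ofReal r :=
  le_antisymm
    (entropy_le_ofReal_of_indexN_le hr (eventually_atTop.2 ⟨1, fun _ hn =>
      indexN_blockLang_le (fun _ => min_le_right _ _) (fun _ => min_le_left _ _) hr hn⟩))
    (ofReal_le_entropy_blockLang hb)

end Entropy

end EntropySurjective

theorem entropy_surjective {α : Type*} [Fintype α] (h : 2 ≤ Fintype.card α) :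
    Function.Surjective (fun L : Set (List α) => entropy L) := by
  classical
  obtain ⟨a, b, hab⟩ := Fintype.exists_pair_of_one_lt_card h
  intro x
  rcases eq_or_ne x ⊤ with rfl | hx
  · exact ⟨_, EntropySurjective.entropy_blockLang_two_pow hab.symm⟩
  · refine ⟨EntropySurjective.blockLang a (EntropySurjective.ceilK x.toReal), ?_⟩
    show entropy _ = x
    rw [EntropySurjective.entropy_blockLang_ceilK hab.symm ENNReal.toReal_nonneg,
      ENNReal.ofReal_toReal hx]
end

section
/- There exists a unary language with entropy exactly 1: the language UInf = {2^{n + 2^{n+m}} + k | n ∈ ℕ, m ≤ 2^{n+1} − 1, k ∈ φ_n(m)} ⊆ ℕ (where φ_n: {0,…,2^{n+1}−1} → P({0,…,n}) are bijections) satisfies ind Θ_n(UInf) ≥ 2^{n+1} for all n, hence η(UInf) = 1. -/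
open Filter

/-- Myhill–Nerode approximation for unary languages (as subsets of `ℕ`). -/
def thetaNatN (L : Set ℕ) (n : ℕ) (a b : ℕ) : Prop :=
  ∀ k ≤ n, ((a + k) ∈ L ↔ (b + k) ∈ L)

noncomputable def indexNatN (L : Set ℕ) (n : ℕ) : ℕ :=
  Nat.card (Quot (thetaNatN L n))

noncomputable def entropyNat (L : Set ℕ) : ENNReal :=
  Filter.limsup (fun n : ℕ => ENNReal.ofReal (Real.logb 2 (indexNatN L n) / n)) Filter.atTop

/-!
Classes of `Θ_n(L)` correspond to the windows `{k ≤ n | a + k ∈ L}`, subsets of `{0,…,n}`.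
In `UInf` the block starting at `2^(n + 2^(n+m))` is followed by the window `φ_n(m)`, and the
blocks are far enough apart not to interfere; as `φ_n` is onto, every subset of `{0,…,n}` occurs
as a window, so `ind Θ_n(UInf) = 2^(n+1)` and `η(UInf) = lim (n+1)/n = 1`.
-/

open Topology Finset
open scoped Classical

noncomputable def window (L : Set ℕ) (n a : ℕ) : Finset ℕ :=
  (range (n + 1)).filter (fun k => a + k ∈ L)

section Window

variable (L : Set ℕ) (n : ℕ)

lemma thetaNatN_iff_window_eq {a b : ℕ} : thetaNatN L n a b ↔ window L n a = window L n b := by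
  simp [thetaNatN, window, Finset.ext_iff]

noncomputable def quotThetaNatNEquivRangeWindow :
    Quot (thetaNatN L n) ≃ Set.range (window L n) :=
  Equiv.ofBijective
    (Quot.lift (fun a => ⟨window L n a, a, rfl⟩)
      fun _ _ h => Subtype.ext ((thetaNatN_iff_window_eq L n).1 h))
    ⟨by
      rintro ⟨a⟩ ⟨b⟩ h
      exact Quot.sound ((thetaNatN_iff_window_eq L n).2 (congrArg Subtype.val h)),
     by
      rintro ⟨_, a, rfl⟩
      exact ⟨Quot.mk _ a, rfl⟩⟩

lemma indexNatN_eq_ncard_range_window : indexNatN L n = (Set.range (window L n)).ncard :=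
  Nat.card_congr (quotThetaNatNEquivRangeWindow L n)

lemma range_window_subset_powerset :
    Set.range (window L n) ⊆ ((range (n + 1)).powerset : Set (Finset ℕ)) := by
  rintro _ ⟨a, rfl⟩
  exact mem_powerset.2 (filter_subset _ _)

lemma indexNatN_eq_two_pow_of_forall_exists_window
    (h : ∀ A ⊆ range (n + 1), ∃ a, window L n a = A) : indexNatN L n = 2 ^ (n + 1) := by
  have hrange : Set.range (window L n) = ((range (n + 1)).powerset : Set (Finset ℕ)) :=
    (range_window_subset_powerset L n).antisymm fun A hA => h A (mem_powerset.1 hA)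
  rw [indexNatN_eq_ncard_range_window, hrange, Set.ncard_coe_finset, card_powerset, card_range]

end Window

lemma entropyNat_eq_one_of_indexNatN_eq {L : Set ℕ}
    (h : ∀ᶠ n in atTop, indexNatN L n = 2 ^ (n + 1)) : entropyNat L = 1 := by
  have hlim : Tendsto (fun n : ℕ => ((n : ℝ) + 1) / n) atTop (𝓝 1) := by
    simpa [add_comm] using tendsto_add_mul_div_add_mul_atTop_nhds (1 : ℝ) 0 1 one_ne_zero
  have hofReal := (ENNReal.continuous_ofReal.tendsto 1).comp hlim
  rw [ENNReal.ofReal_one] at hofReal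
  refine (limsup_congr ?_).trans hofReal.limsup_eq
  filter_upwards [h] with n hn
  rw [Function.comp_apply, hn, Nat.cast_pow, Nat.cast_ofNat, Real.logb_pow,
    Real.logb_self_eq_one one_lt_two, mul_one, Nat.cast_succ]

lemma two_pow_add_inj {a b k l : ℕ} (hk : k < 2 ^ a) (hl : l < 2 ^ b)
    (h : 2 ^ a + k = 2 ^ b + l) : a = b ∧ k = l := by
  have hlog : ∀ {c j : ℕ}, j < 2 ^ c → Nat.log 2 (2 ^ c + j) = c := fun hj =>
    Nat.log_eq_of_pow_le_of_lt_pow (Nat.le_add_right _ _) (by rw [pow_succ]; omega)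
  have hab : a = b := by rw [← hlog hk, ← hlog hl, h]
  subst hab
  exact ⟨rfl, by omega⟩

lemma add_two_pow_add_inj {n m n' m' : ℕ} (h : n + 2 ^ (n + m) = n' + 2 ^ (n' + m')) :
    n = n' ∧ m = m' := by
  have hlt : ∀ {a b : ℕ}, a < 2 ^ (a + b) := fun {a b} =>
    (Nat.le_add_right a b).trans_lt Nat.lt_two_pow_self
  have := two_pow_add_inj hlt hlt (by omega : 2 ^ (n + m) + n = 2 ^ (n' + m') + n')
  omega

section UInf

variable (φ : ℕ → ℕ → Finset ℕ)

def uInf : Set ℕ :=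
  {x : ℕ | ∃ n m k : ℕ, m ≤ 2 ^ (n + 1) - 1 ∧ k ∈ φ n m ∧ x = 2 ^ (n + 2 ^ (n + m)) + k}

variable {φ}
variable (hφ : ∀ n, Set.MapsTo (φ n) (Set.Iio (2 ^ (n + 1))) {A | A ⊆ range (n + 1)})
include hφ

lemma le_of_mem_of_mapsTo {n m k : ℕ} (hm : m ≤ 2 ^ (n + 1) - 1) (hk : k ∈ φ n m) : k ≤ n := by
  have hm' : m < 2 ^ (n + 1) := by have := Nat.one_le_two_pow (n := n + 1); omega
  exact Nat.lt_succ_iff.1 (mem_range.1 (hφ n hm' hk))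

lemma two_pow_add_mem_uInf_iff {n m k : ℕ} (hm : m < 2 ^ (n + 1)) (hk : k ≤ n) :
    2 ^ (n + 2 ^ (n + m)) + k ∈ uInf φ ↔ k ∈ φ n m := by
  refine ⟨?_, fun hmem => ⟨n, m, k, by omega, hmem, rfl⟩⟩
  rintro ⟨n', m', k', hm', hk', heq⟩
  have hsmall : ∀ {a b j : ℕ}, j ≤ a → j < 2 ^ (a + 2 ^ (a + b)) := fun hj =>
    (hj.trans (Nat.le_add_right _ _)).trans_lt Nat.lt_two_pow_self
  obtain ⟨hexp, rfl⟩ := two_pow_add_inj (hsmall hk) (hsmall (le_of_mem_of_mapsTo hφ hm' hk')) heq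
  obtain ⟨rfl, rfl⟩ := add_two_pow_add_inj hexp
  exact hk'

lemma window_uInf {n m : ℕ} (hm : m < 2 ^ (n + 1)) :
    window (uInf φ) n (2 ^ (n + 2 ^ (n + m))) = φ n m := by
  ext k
  rw [window, mem_filter, mem_range]
  constructor
  · rintro ⟨hk, hmem⟩
    exact (two_pow_add_mem_uInf_iff hφ hm (Nat.lt_succ_iff.1 hk)).1 hmem
  · intro hk
    have hkn := mem_range.1 (hφ n hm hk)
    exact ⟨hkn, (two_pow_add_mem_uInf_iff hφ hm (Nat.lt_succ_iff.1 hkn)).2 hk⟩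

lemma indexNatN_uInf {n : ℕ}
    (hsurj : Set.SurjOn (φ n) (Set.Iio (2 ^ (n + 1))) {A | A ⊆ range (n + 1)}) :
    indexNatN (uInf φ) n = 2 ^ (n + 1) := by
  refine indexNatN_eq_two_pow_of_forall_exists_window _ n fun A hA => ?_
  obtain ⟨m, hm, rfl⟩ := hsurj hA
  exact ⟨_, window_uInf hφ hm⟩

end UInf

theorem entropy_UInf (φ : ℕ → ℕ → Finset ℕ)
    (hφ : ∀ n : ℕ, Set.BijOn (φ n) (Set.Iio (2 ^ (n + 1)))
      {A : Finset ℕ | A ⊆ Finset.range (n + 1)}) :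
    (∀ n : ℕ, 2 ^ (n + 1) ≤ indexNatN
        {x : ℕ | ∃ n m k : ℕ, m ≤ 2 ^ (n + 1) - 1 ∧ k ∈ φ n m ∧
          x = 2 ^ (n + 2 ^ (n + m)) + k} n) ∧
      entropyNat {x : ℕ | ∃ n m k : ℕ, m ≤ 2 ^ (n + 1) - 1 ∧ k ∈ φ n m ∧
          x = 2 ^ (n + 2 ^ (n + m)) + k} = 1 := by
  have hindex : ∀ n, indexNatN (uInf φ) n = 2 ^ (n + 1) := fun n =>
    indexNatN_uInf (fun n => (hφ n).mapsTo) (hφ n).surjOn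
  exact ⟨fun n => (hindex n).ge, entropyNat_eq_one_of_indexNatN_eq (.of_forall hindex)⟩
end

section
/- Let A be a deterministic ε-free k-stack push-down automaton with stack alphabets Γ₁,…,Γ_k. Then the topological entropy of the accepted language satisfies η(L(A)) ≤ log₂|Γ₁| + … + log₂|Γ_k|. -/
/-!
A configuration of a `k`-stack automaton influences the next `n` steps only through its
state and the top `n` symbols of each stack. Hence the `n`-th Myhill–Nerode index of the
accepted language is at most `|Q| · (n + 1)^k · (|Γ₁| ⋯ |Γ_k|)^n`, whose base-2 logarithm
grows like `n · (log₂|Γ₁| + ⋯ + log₂|Γ_k|) + O(log n)`.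
-/

open Filter

/-- A deterministic, ε-free, total `k`-stack push-down automaton: the transition
function reads the current state, the top symbol of each stack (`none` meaning the
stack is empty), and an input letter; it yields the new state and, for each stack,
the word pushed in place of the popped top symbol. -/
structure KPDA (k : ℕ) (Q σ : Type*) (Γ : Fin k → Type*) where
  δ : Q → (∀ i, Option (Γ i)) → σ → Q × (∀ i, List (Γ i))
  q0 : Q
  F : Set Q

/-- One step of the automaton: pop the top of each stack and push the prescribed words. -/
def KPDA.step {k : ℕ} {Q σ : Type*} {Γ : Fin k → Type*} (A : KPDA k Q σ Γ)
    (c : Q × (∀ i, List (Γ i))) (a : σ) : Q × (∀ i, List (Γ i)) :=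
  let r := A.δ c.1 (fun i => (c.2 i).head?) a
  (r.1, fun i => r.2 i ++ (c.2 i).tail)

/-- Running the automaton on an input word from a configuration. -/
def KPDA.run {k : ℕ} {Q σ : Type*} {Γ : Fin k → Type*} (A : KPDA k Q σ Γ)
    (c : Q × (∀ i, List (Γ i))) : List σ → Q × (∀ i, List (Γ i))
  | [] => c
  | a :: w => A.run (A.step c a) w

/-- The language accepted by the automaton (acceptance by final state, starting with
empty stacks). -/
def KPDA.lang {k : ℕ} {Q σ : Type*} {Γ : Fin k → Type*} (A : KPDA k Q σ Γ) :
    Set (List σ) :=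
  {w | (A.run (A.q0, fun _ => []) w).1 ∈ A.F}

open Topology

namespace List

variable {α : Type*}

lemma head?_eq_of_take_succ_eq {l l' : List α} {m : ℕ}
    (h : l.take (m + 1) = l'.take (m + 1)) : l.head? = l'.head? := by
  cases l <;> cases l' <;> simp_all

lemma take_tail_eq_of_take_succ_eq {l l' : List α} {m : ℕ}
    (h : l.take (m + 1) = l'.take (m + 1)) : l.tail.take m = l'.tail.take m := by
  cases l <;> cases l' <;> simp_all

lemma take_append_eq_of_take_eq {m : ℕ} (a : List α) {b b' : List α}
    (h : b.take m = b'.take m) : (a ++ b).take m = (a ++ b').take m := by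
  have h' : b.take (m - a.length) = b'.take (m - a.length) := by
    simpa [take_take] using congrArg (take (m - a.length)) h
  rw [take_append, take_append, h']

/-- A code for `l.take n` (see `take_eq_of_prefixCode_eq`) in a type of cardinality
`(n + 1) * |α| ^ n`; missing entries are padded with `Classical.arbitrary α`. -/
noncomputable def prefixCode [Nonempty α] (n : ℕ) (l : List α) :
    Fin (n + 1) × (Fin n → α) :=
  (⟨min n l.length, by omega⟩, fun j => l.getD j (Classical.arbitrary α))

lemma take_eq_of_prefixCode_eq [Nonempty α] {n : ℕ} {l l' : List α}
    (h : prefixCode n l = prefixCode n l') : l.take n = l'.take n := by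
  have hlen : (l.take n).length = (l'.take n).length := by
    simpa [prefixCode] using congrArg (fun p => (p.1 : ℕ)) h
  refine ext_getElem hlen fun j hj hj' => ?_
  have hjn : j < n := by rw [length_take] at hj; omega
  have hl : j < l.length := by rw [length_take] at hj; omega
  have hl' : j < l'.length := by rw [length_take] at hj'; omega
  have := congrArg (fun p => p.2 ⟨j, hjn⟩) h
  simp only [prefixCode, getD_eq_getElem _ _ hl, getD_eq_getElem _ _ hl'] at this
  simpa [getElem_take] using this

end List

lemma indexN_le_natCard {α T : Type*} [Finite T] (L : Set (List α)) (n : ℕ)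
    (f : List α → T) (hf : ∀ u v, f u = f v → thetaN L n u v) :
    indexN L n ≤ Nat.card T := by
  have : Finite (Quotient (Setoid.ker f)) := .of_equiv _ (Setoid.quotientKerEquivRange f).symm
  calc indexN L n ≤ Nat.card (Quotient (Setoid.ker f)) :=
        Nat.card_le_card_of_surjective (Quot.factor _ _ hf)
          (Quot.ind fun u => ⟨Quot.mk _ u, rfl⟩)
    _ = Nat.card (Set.range f) := Nat.card_congr (Setoid.quotientKerEquivRange f)
    _ ≤ Nat.card T := Nat.card_le_card_of_injective _ Subtype.val_injective

namespace KPDA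

variable {k : ℕ} {Q σ : Type*} {Γ : Fin k → Type*} (A : KPDA k Q σ Γ)

lemma run_append (c : Q × (∀ i, List (Γ i))) (u w : List σ) :
    A.run c (u ++ w) = A.run (A.run c u) w := by
  induction u generalizing c with
  | nil => rfl
  | cons a u ih => exact ih (A.step c a)

lemma run_fst_eq_of_take_eq {n : ℕ} (w : List σ) (hw : w.length ≤ n) (q : Q)
    {s t : ∀ i, List (Γ i)} (hst : ∀ i, (s i).take n = (t i).take n) :
    (A.run (q, s) w).1 = (A.run (q, t) w).1 := by
  induction w generalizing n q s t with
  | nil => rfl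
  | cons a w ih =>
    obtain ⟨m, rfl⟩ : ∃ m, n = m + 1 := ⟨n - 1, by rw [List.length_cons] at hw; omega⟩
    have htops : (fun i => (s i).head?) = (fun i => (t i).head?) :=
      funext fun i => List.head?_eq_of_take_succ_eq (hst i)
    show (A.run (A.step (q, s) a) w).1 = (A.run (A.step (q, t) a) w).1
    simp only [step, htops]
    exact ih (by simpa using hw) _ fun i =>
      List.take_append_eq_of_take_eq _ (List.take_tail_eq_of_take_succ_eq (hst i))

lemma indexN_lang_le [Fintype Q] [∀ i, Fintype (Γ i)] [∀ i, Nonempty (Γ i)] (n : ℕ) :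
    indexN A.lang n ≤ Fintype.card Q * (n + 1) ^ k * (∏ i, Fintype.card (Γ i)) ^ n := by
  let c₀ : Q × (∀ i, List (Γ i)) := (A.q0, fun _ => [])
  let signature : List σ → Q × (∀ i, Fin (n + 1) × (Fin n → Γ i)) := fun u =>
    ((A.run c₀ u).1, fun i => List.prefixCode n ((A.run c₀ u).2 i))
  refine (indexN_le_natCard A.lang n signature fun u v h w hw => ?_).trans_eq ?_
  · obtain ⟨hstate, hcodes⟩ := Prod.ext_iff.mp h
    have hruns : (A.run (A.run c₀ u) w).1 = (A.run (A.run c₀ v) w).1 := by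
      rw [← Prod.mk.eta (p := A.run c₀ u), ← Prod.mk.eta (p := A.run c₀ v), hstate]
      exact A.run_fst_eq_of_take_eq w hw _ fun i =>
        List.take_eq_of_prefixCode_eq (congrFun hcodes i)
    show (A.run c₀ (u ++ w)).1 ∈ A.F ↔ (A.run c₀ (v ++ w)).1 ∈ A.F
    rw [run_append, run_append, hruns]
  · simp [Nat.card_eq_fintype_card, Finset.prod_mul_distrib, Finset.prod_pow, mul_assoc]

end KPDA

lemma tendsto_logb_natCast_add_one_div (b : ℝ) :
    Tendsto (fun n : ℕ => Real.logb b (n + 1) / n) atTop (𝓝 0) := by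
  have hlim := (Real.tendsto_pow_logb_div_mul_add_atTop (b := b) 1 (-1) 1 one_ne_zero).comp
    (tendsto_atTop_add_const_right atTop 1 tendsto_natCast_atTop_atTop)
  refine hlim.congr fun n => ?_
  simp

lemma tendsto_logb_mul_pow_mul_pow_div {b C N : ℝ} (hC : 0 < C) (hN : 0 < N) (k : ℕ) :
    Tendsto (fun n : ℕ => Real.logb b (C * (n + 1) ^ k * N ^ n) / n) atTop
      (𝓝 (Real.logb b N)) := by
  have hlim : Tendsto (fun n : ℕ => Real.logb b C / n + k * (Real.logb b (n + 1) / n)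
      + Real.logb b N) atTop (𝓝 (0 + k * 0 + Real.logb b N)) :=
    ((tendsto_const_div_atTop_nhds_zero_nat _).add
      ((tendsto_logb_natCast_add_one_div b).const_mul _)).add tendsto_const_nhds
  rw [mul_zero, zero_add, zero_add] at hlim
  refine hlim.congr' ?_
  filter_upwards [eventually_ne_atTop 0] with n hn
  rw [Real.logb_mul (by positivity) (by positivity), Real.logb_mul (by positivity)
    (by positivity), Real.logb_pow, Real.logb_pow]
  field_simp

lemma entropy_le_of_indexN_le {α : Type*} {L : Set (List α)} {C N k : ℕ} (hC : 0 < C)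
    (hN : 0 < N) (h : ∀ n, indexN L n ≤ C * (n + 1) ^ k * N ^ n) :
    entropy L ≤ ENNReal.ofReal (Real.logb 2 N) := by
  have hbound (n : ℕ) :
      Real.logb 2 (indexN L n) ≤ Real.logb 2 ((C : ℝ) * (n + 1) ^ k * N ^ n) := by
    rcases Nat.eq_zero_or_pos (indexN L n) with h0 | hpos
    · rw [h0, Nat.cast_zero, Real.logb_zero]
      exact Real.logb_nonneg one_lt_two
        (by norm_cast; exact Nat.one_le_iff_ne_zero.mpr (by positivity))
    · exact Real.logb_le_logb_of_le one_lt_two (by exact_mod_cast hpos) (by exact_mod_cast h n)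
  have hlim := (ENNReal.continuous_ofReal.tendsto _).comp
    (tendsto_logb_mul_pow_mul_pow_div (b := 2) (Nat.cast_pos.mpr hC) (Nat.cast_pos.mpr hN) k)
  rw [entropy, ← hlim.limsup_eq]
  exact limsup_le_limsup (Eventually.of_forall fun n =>
    ENNReal.ofReal_le_ofReal (div_le_div_of_nonneg_right (hbound n) n.cast_nonneg))

theorem entropy_kpda_le_general {k : ℕ} {Q σ : Type*} {Γ : Fin k → Type*}
    [Fintype Q] [∀ i, Fintype (Γ i)] [∀ i, Nonempty (Γ i)]
    (A : KPDA k Q σ Γ) :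
    entropy A.lang ≤ ∑ i : Fin k, ENNReal.ofReal (Real.logb 2 (Fintype.card (Γ i))) := by
  have hQ : 0 < Fintype.card Q := Fintype.card_pos_iff.mpr ⟨A.q0⟩
  have hΓ : 0 < ∏ i, Fintype.card (Γ i) := Finset.prod_pos fun i _ => Fintype.card_pos
  calc entropy A.lang ≤ ENNReal.ofReal (Real.logb 2 (∏ i, Fintype.card (Γ i) : ℕ)) :=
        entropy_le_of_indexN_le hQ hΓ A.indexN_lang_le
    _ = ∑ i : Fin k, ENNReal.ofReal (Real.logb 2 (Fintype.card (Γ i))) := by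
        rw [Nat.cast_prod, Real.logb_prod _ _ fun i _ => by positivity,
          ENNReal.ofReal_sum_of_nonneg fun i _ => Real.logb_nonneg one_lt_two
            (by exact_mod_cast Fintype.card_pos)]

theorem entropy_kpda_le {k : ℕ} {Q σ : Type*} {Γ : Fin k → Type*}
    [Fintype Q] [Fintype σ] [∀ i, Fintype (Γ i)] [∀ i, Nonempty (Γ i)]
    (A : KPDA k Q σ Γ) :
    entropy A.lang ≤ ∑ i : Fin k, ENNReal.ofReal (Real.logb 2 (Fintype.card (Γ i))) :=
  entropy_kpda_le_general A
end

section
/- Let p₁,…,p_k be the first k primes and let n be a multiple of p₁⋯p_k. Then the number s_n of subsets A ⊆ {0,…,n−1} such that for every prime p ≤ n the set A mod p is not all of {0,…,p−1} satisfies s_n ≤ (∏_{i≤k} p_i) · 2^{n·∏_{i≤k} (p_i−1)/p_i}. -/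
/-!
A plausible `A` misses some residue `ℓᵢ` modulo each of the primes `pᵢ ∣ n`, so it is a subset
of the numbers below `n` avoiding all the classes `ℓᵢ mod pᵢ`. By the Chinese remainder theorem
these numbers have density `∏ (pᵢ - 1) / pᵢ` in every block of `∏ pᵢ` consecutive integers,
so there are `n / ∏ pᵢ * ∏ (pᵢ - 1)` of them; summing `2 ^ (that number)` over the `∏ pᵢ`
choices of `ℓ` gives the bound.
-/

/-- `A ⊆ {0,…,n−1}` represents a plausible sequence of primes of length `n` if for
every prime `p ≤ n` the set of residues of `A` modulo `p` is not all of `{0,…,p−1}`. -/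
def PlausibleSeq (n : ℕ) (A : Finset ℕ) : Prop :=
  A ⊆ Finset.range n ∧
    ∀ p : ℕ, p.Prime → p ≤ n → A.image (· % p) ≠ Finset.range p

open Finset Function

theorem Function.Periodic.count_mul {p : ℕ → Prop} [DecidablePred p] {a : ℕ}
    (hp : Periodic p a) (c : ℕ) : Nat.count p (c * a) = c * Nat.count p a := by
  induction c with
  | zero => simp
  | succ c ih =>
    have shift : (fun x ↦ p (c * a + x)) = p := funext fun x ↦ by
      rw [add_comm]; exact hp.nat_mul c x
    simp only [add_mul, one_mul, Nat.count_add, shift, ih]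

theorem Nat.count_eq_card_filter_zmod_val (p : ℕ → Prop) [DecidablePred p] (n : ℕ) [NeZero n] :
    Nat.count p n = #{z : ZMod n | p z.val} := by
  rw [Nat.count_eq_card_filter_range]
  refine card_bij' (fun r _ ↦ (r : ZMod n)) (fun z _ ↦ z.val) ?_ ?_ ?_ ?_
  · intro r hr
    simp only [mem_filter, mem_range, mem_univ, true_and] at hr ⊢
    rw [ZMod.val_natCast, Nat.mod_eq_of_lt hr.1]
    exact hr.2
  · intro z hz
    simp only [mem_filter, mem_range, mem_univ, true_and] at hz ⊢
    exact ⟨ZMod.val_lt z, hz⟩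
  · intro r hr
    rw [ZMod.val_natCast, Nat.mod_eq_of_lt (mem_range.1 (mem_filter.1 hr).1)]
  · intro z _
    exact ZMod.natCast_zmod_val z

section AvoidingResidues

variable {ι : Type*} [Fintype ι] {m : ι → ℕ} {ℓ : ι → ℕ}

theorem Nat.count_forall_mod_ne_prod (hm : Pairwise (Nat.Coprime on m)) (hℓ : ∀ i, ℓ i < m i) :
    Nat.count (fun r ↦ ∀ i, r % m i ≠ ℓ i) (∏ i, m i) = ∏ i, (m i - 1) := by
  classical
  have hpos : ∀ i, 0 < m i := fun i ↦ (Nat.zero_le _).trans_lt (hℓ i)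
  have : ∀ i, NeZero (m i) := fun i ↦ ⟨(hpos i).ne'⟩
  have : NeZero (∏ i, m i) := ⟨(prod_pos fun i _ ↦ hpos i).ne'⟩
  have hcrt : ∀ z : ZMod (∏ i, m i), (∀ i, z.val % m i ≠ ℓ i) ↔
      ZMod.prodEquivPi m hm z ∈ Fintype.piFinset fun i ↦ ({(ℓ i : ZMod (m i))}ᶜ) := by
    intro z
    simp only [Fintype.mem_piFinset, mem_compl, mem_singleton, ZMod.prodEquivPi_apply,
      ZMod.castHom_apply, ZMod.cast_eq_val, ZMod.natCast_eq_natCast_iff', Nat.mod_eq_of_lt (hℓ _)]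
  calc Nat.count (fun r ↦ ∀ i, r % m i ≠ ℓ i) (∏ i, m i)
      = #{z : ZMod (∏ i, m i) | ∀ i, z.val % m i ≠ ℓ i} :=
        Nat.count_eq_card_filter_zmod_val _ _
    _ = #(Fintype.piFinset fun i ↦ ({(ℓ i : ZMod (m i))}ᶜ)) :=
        card_equiv (ZMod.prodEquivPi m hm).toEquiv fun z ↦ by simpa using hcrt z
    _ = ∏ i, (m i - 1) := by simp [Fintype.card_piFinset, card_compl]

theorem card_filter_range_forall_mod_ne (hm : Pairwise (Nat.Coprime on m))
    (hℓ : ∀ i, ℓ i < m i) {N : ℕ} (hN : ∏ i, m i ∣ N) :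
    #{x ∈ range N | ∀ i, x % m i ≠ ℓ i} = (N / ∏ i, m i) * ∏ i, (m i - 1) := by
  have hpos : 0 < ∏ i, m i := prod_pos fun i _ ↦ (Nat.zero_le _).trans_lt (hℓ i)
  have hperiodic : Periodic (fun x ↦ ∀ i, x % m i ≠ ℓ i) (∏ i, m i) := fun x ↦ by
    refine forall_congr fun i ↦ ?_
    obtain ⟨c, hc⟩ := dvd_prod_of_mem m (mem_univ i)
    rw [hc, Nat.add_mul_mod_self_left]
  rw [← Nat.count_eq_card_filter_range, ← Nat.div_mul_cancel hN, hperiodic.count_mul,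
    Nat.count_forall_mod_ne_prod hm hℓ, Nat.mul_div_cancel _ hpos]

end AvoidingResidues

theorem PlausibleSeq.exists_forall_mod_ne {n : ℕ} {A : Finset ℕ} (hA : PlausibleSeq n A)
    {p : ℕ} (hp : p.Prime) (hpn : p ∣ n) : ∃ ℓ < p, ∀ a ∈ A, a % p ≠ ℓ := by
  rcases Nat.eq_zero_or_pos n with rfl | hn
  · exact ⟨0, hp.pos, by simp [subset_empty.mp hA.1]⟩
  have hsub : A.image (· % p) ⊂ range p :=
    Finset.ssubset_iff_subset_ne.2 ⟨fun r hr ↦ by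
      obtain ⟨a, -, rfl⟩ := mem_image.1 hr; exact mem_range.2 (Nat.mod_lt a hp.pos),
      hA.2 p hp (Nat.le_of_dvd hn hpn)⟩
  obtain ⟨ℓ, hℓ, hmiss⟩ := exists_of_ssubset hsub
  exact ⟨ℓ, mem_range.1 hℓ, fun a ha h ↦ hmiss (mem_image.2 ⟨a, ha, h⟩)⟩

theorem card_plausibleSeq_le {ι : Type*} [Fintype ι] {m : ι → ℕ} (hprime : ∀ i, (m i).Prime)
    (hinj : Injective m) {n : ℕ} (hn : ∏ i, m i ∣ n) :
    Nat.card {A : Finset ℕ // PlausibleSeq n A} ≤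
      (∏ i, m i) * 2 ^ ((n / ∏ i, m i) * ∏ i, (m i - 1)) := by
  classical
  have hm : Pairwise (Nat.Coprime on m) := fun i j hij ↦
    (Nat.coprime_primes (hprime i) (hprime j)).2 (hinj.ne hij)
  let avoiding (ℓ : ι → ℕ) : Finset ℕ := {x ∈ range n | ∀ i, x % m i ≠ ℓ i}
  let residues := Fintype.piFinset fun i ↦ range (m i)
  have hsub : {A | PlausibleSeq n A} ⊆ ↑(residues.biUnion fun ℓ ↦ (avoiding ℓ).powerset) := by
    intro A hA
    choose ℓ hℓ hmiss using fun i ↦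
      hA.exists_forall_mod_ne (hprime i) ((dvd_prod_of_mem m (mem_univ i)).trans hn)
    simp only [coe_biUnion, Set.mem_iUnion, mem_coe, mem_powerset, exists_prop]
    exact ⟨ℓ, Fintype.mem_piFinset.2 fun i ↦ mem_range.2 (hℓ i),
      fun a ha ↦ mem_filter.2 ⟨hA.1 ha, fun i ↦ hmiss i a ha⟩⟩
  calc Nat.card {A : Finset ℕ // PlausibleSeq n A}
      = Set.ncard {A | PlausibleSeq n A} := Nat.card_coe_set_eq _
    _ ≤ #(residues.biUnion fun ℓ ↦ (avoiding ℓ).powerset) :=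
        (Set.ncard_le_ncard hsub).trans_eq (Set.ncard_coe_finset _)
    _ ≤ ∑ ℓ ∈ residues, #(avoiding ℓ).powerset := card_biUnion_le
    _ = (∏ i, m i) * 2 ^ ((n / ∏ i, m i) * ∏ i, (m i - 1)) := by
        rw [sum_congr rfl fun ℓ hℓ ↦ by
          rw [card_powerset, card_filter_range_forall_mod_ne hm
            (fun i ↦ mem_range.1 (Fintype.mem_piFinset.1 hℓ i)) hn]]
        simp [residues]

theorem plausible_seq_count_bound (k n : ℕ)
    (hdvd : (∏ i ∈ Finset.range k, Nat.nth Nat.Prime i) ∣ n) :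
    Nat.card {A : Finset ℕ // PlausibleSeq n A} ≤
      (∏ i ∈ Finset.range k, Nat.nth Nat.Prime i) *
        2 ^ ((n / ∏ i ∈ Finset.range k, Nat.nth Nat.Prime i) *
          ∏ i ∈ Finset.range k, (Nat.nth Nat.Prime i - 1)) := by
  have hP := Fin.prod_univ_eq_prod_range (Nat.nth Nat.Prime) k
  have hQ := Fin.prod_univ_eq_prod_range (fun i ↦ Nat.nth Nat.Prime i - 1) k
  rw [← hP] at hdvd
  have := card_plausibleSeq_le (m := fun i : Fin k ↦ Nat.nth Nat.Prime i)
    (fun i ↦ Nat.prime_nth_prime i)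
    ((Nat.nth_injective Nat.infinite_setOfPred_prime).comp Fin.val_injective) hdvd
  rwa [hP, hQ] at this
end

section
/- The unary language Prime = {n ∈ ℕ | n prime} has topological entropy zero: η(Prime) = 0. -/
open Filter

/-! Fix `z` and let `M = primorial z`. For `a > z` every prime among `a, …, a + n` is coprime
to `M`, so the `Θ_n`-class of `a`, which is the set of `k ≤ n` with `a + k` prime, lies inside
the set of offsets `k ≤ n` with `a + k` coprime to `M`. That set depends only on `a mod M` and has
at most `φ(M) ((n + 1) / M + 1)` elements, so `log₂ (ind Θ_n) ≤ (n + 1) φ(M) / M + O_z(1)` and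
`η(Prime) ≤ φ(M) / M = ∏_{p ≤ z} (1 - 1/p)`, which tends to `0` as `z → ∞` because `∑ 1/p`
diverges. -/

open Finset Real
open scoped Nat Topology

section Pattern

variable (L : Set ℕ) [DecidablePred (· ∈ L)]

def pattern (n a : ℕ) : Finset ℕ := {k ∈ range (n + 1) | a + k ∈ L}

variable {L}

lemma thetaNatN_iff_pattern_eq {n a b : ℕ} :
    thetaNatN L n a b ↔ pattern L n a = pattern L n b := by
  simp only [thetaNatN, pattern, Finset.ext_iff, mem_filter, mem_range, Nat.lt_succ_iff]
  exact ⟨fun h k => and_congr_right fun hk => h k hk,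
    fun h k hk => (and_congr_right_iff.1 (h k)) hk⟩

lemma indexNatN_le_card {n : ℕ} (T : Finset (Finset ℕ)) (hT : ∀ a, pattern L n a ∈ T) :
    indexNatN L n ≤ #T := by
  let F : Quot (thetaNatN L n) → T :=
    Quot.lift (fun a => ⟨pattern L n a, hT a⟩)
      fun a b h => Subtype.ext (thetaNatN_iff_pattern_eq.1 h)
  have hF : Function.Injective F := by
    rintro ⟨a⟩ ⟨b⟩ h
    exact Quot.sound (thetaNatN_iff_pattern_eq.2 (congrArg Subtype.val h))
  simpa [indexNatN] using Nat.card_le_card_of_injective F hF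

end Pattern

def coprimeOffsets (m n r : ℕ) : Finset ℕ := {k ∈ range (n + 1) | m.Coprime (r + k)}

lemma card_coprimeOffsets_le {m : ℕ} (hm : m ≠ 0) (n r : ℕ) :
    #(coprimeOffsets m n r) ≤ φ m * ((n + 1) / m + 1) := by
  have h : (coprimeOffsets m n r).map (addLeftEmbedding r) =
      {x ∈ Ico r (r + (n + 1)) | m.Coprime x} := by
    have hIco := map_add_left_Ico 0 (n + 1) r
    rw [add_zero] at hIco
    rw [← hIco, filter_map, coprimeOffsets, range_eq_Ico]
    rfl
  rw [← card_map (addLeftEmbedding r), h]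
  exact Nat.Ico_filter_coprime_le r (n + 1) hm

lemma pattern_primes_subset_coprimeOffsets {z a : ℕ} (hza : z < a) (n : ℕ) :
    pattern {p | p.Prime} n a ⊆ coprimeOffsets (primorial z) n (a % primorial z) := by
  intro k hk
  simp only [pattern, coprimeOffsets, mem_filter, Set.mem_ofPred_eq] at hk ⊢
  obtain ⟨hkn, hprime⟩ := hk
  refine ⟨hkn, ?_⟩
  have hcop : (primorial z).Coprime (a + k) :=
    Nat.coprime_comm.1 <| hprime.coprime_iff_not_dvd.2 fun h => by
      have := hprime.dvd_primorial_iff.1 h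
      omega
  have hak : a + k = a % primorial z + k + primorial z * (a / primorial z) := by
    linarith [Nat.mod_add_div a (primorial z)]
  rwa [hak, Nat.coprime_add_mul_left_right] at hcop

lemma indexNatN_primes_le (n z : ℕ) :
    indexNatN {p | p.Prime} n ≤
      (z + 1) + primorial z * 2 ^ (φ (primorial z) * ((n + 1) / primorial z + 1)) := by
  set M := primorial z
  let T := (range (z + 1)).image (pattern {p | p.Prime} n) ∪
    (range M).biUnion fun r => (coprimeOffsets M n r).powerset
  have hT : ∀ a, pattern {p | p.Prime} n a ∈ T := by
    intro a
    rcases le_or_gt a z with ha | ha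
    · exact mem_union_left _ (mem_image_of_mem _ (mem_range.2 (Nat.lt_succ_of_le ha)))
    · exact mem_union_right _ <| mem_biUnion.2
        ⟨a % M, mem_range.2 (Nat.mod_lt _ (primorial_pos z)),
          mem_powerset.2 (pattern_primes_subset_coprimeOffsets ha n)⟩
  refine (indexNatN_le_card T hT).trans <| (card_union_le _ _).trans <|
    Nat.add_le_add (card_image_le.trans (card_range _).le) <| card_biUnion_le.trans ?_
  calc ∑ r ∈ range M, #(coprimeOffsets M n r).powerset
      ≤ ∑ r ∈ range M, 2 ^ (φ M * ((n + 1) / M + 1)) := by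
        gcongr with r
        rw [card_powerset]
        exact Nat.pow_le_pow_right two_pos (card_coprimeOffsets_le (primorial_ne_zero z) n r)
    _ = M * 2 ^ (φ M * ((n + 1) / M + 1)) := by simp

lemma logb_indexNatN_primes_le (n z : ℕ) :
    logb 2 (indexNatN {p | p.Prime} n) ≤ logb 2 (z + 1 + primorial z) + φ (primorial z) +
      (n + 1) * (φ (primorial z) / primorial z : ℝ) := by
  set M := primorial z
  set B := φ M * ((n + 1) / M + 1)
  have hindex : indexNatN {p | p.Prime} n ≤ (z + 1 + M) * 2 ^ B := by
    refine (indexNatN_primes_le n z).trans ?_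
    nlinarith [Nat.one_le_two_pow (n := B)]
  have hB : (B : ℝ) ≤ φ M + (n + 1) * (φ M / M) := by
    have hdiv : (((n + 1) / M : ℕ) : ℝ) ≤ (n + 1) / M := by exact_mod_cast Nat.cast_div_le
    calc (B : ℝ) = φ M * (((n + 1) / M : ℕ) + 1) := by push_cast [B]; ring
      _ ≤ φ M * ((n + 1) / M + 1) := by gcongr
      _ = φ M + (n + 1) * (φ M / M) := by ring
  have hlog : logb 2 (indexNatN {p | p.Prime} n) ≤ logb 2 (((z + 1 + M) * 2 ^ B : ℕ) : ℝ) := by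
    rcases Nat.eq_zero_or_pos (indexNatN {p | p.Prime} n) with h0 | hpos
    · rw [h0, Nat.cast_zero, logb_zero]
      exact logb_nonneg one_lt_two (by exact_mod_cast Nat.one_le_iff_ne_zero.2 (by positivity))
    · exact logb_le_logb_of_le one_lt_two (by exact_mod_cast hpos) (by exact_mod_cast hindex)
  calc logb 2 (indexNatN {p | p.Prime} n) ≤ logb 2 (((z + 1 + M) * 2 ^ B : ℕ) : ℝ) := hlog
    _ = logb 2 (z + 1 + M) + B := by
      push_cast
      rw [logb_mul (by positivity) (by positivity), logb_pow, logb_self_eq_one one_lt_two, mul_one]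
    _ ≤ _ := by linarith

lemma limsup_ofReal_div_le {f : ℕ → ℝ} {c t : ℝ} (hf : ∀ n : ℕ, f n ≤ c + (n + 1) * t) :
    limsup (fun n : ℕ => ENNReal.ofReal (f n / n)) atTop ≤ ENNReal.ofReal t := by
  have hlim :
      Tendsto (fun n : ℕ => ENNReal.ofReal ((c + t) / n + t)) atTop (𝓝 (ENNReal.ofReal t)) :=
    ENNReal.tendsto_ofReal <| by
      simpa using (tendsto_const_div_atTop_nhds_zero_nat (c + t)).add_const t
  rw [← hlim.limsup_eq]
  refine limsup_le_limsup (eventually_atTop.2 ⟨1, fun n hn => ENNReal.ofReal_le_ofReal ?_⟩)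
  have hn : (0 : ℝ) < n := by exact_mod_cast hn
  rw [div_add' _ _ _ hn.ne', div_le_div_iff_of_pos_right hn]
  linarith [hf n]

lemma totient_div_le_exp_neg_sum_inv (n : ℕ) :
    (φ n / n : ℝ) ≤ exp (-∑ p ∈ n.primeFactors, (p : ℝ)⁻¹) := by
  rcases eq_or_ne n 0 with rfl | hn
  · simp
  have h := congrArg (Rat.cast : ℚ → ℝ) (Nat.totient_eq_mul_prod_factors n)
  push_cast at h
  rw [h, mul_div_cancel_left₀ _ (by positivity), ← sum_neg_distrib, exp_sum]
  refine prod_le_prod (fun p hp => ?_) (fun p _ => ?_)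
  · have hp : (1 : ℝ) ≤ p := by exact_mod_cast (Nat.prime_of_mem_primeFactors hp).one_lt.le
    exact sub_nonneg.2 (inv_le_one_of_one_le₀ hp)
  · linarith [add_one_le_exp (-(p : ℝ)⁻¹)]

lemma tendsto_sum_primesLE_inv :
    Tendsto (fun z => ∑ p ∈ Nat.primesLE z, (p : ℝ)⁻¹) atTop atTop := by
  have h := (not_summable_iff_tendsto_nat_atTop_of_nonneg
    (Set.indicator_nonneg fun n _ => by positivity)).1 not_summable_one_div_on_primes
  refine (h.comp (tendsto_add_atTop_nat 1)).congr fun z => ?_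
  simp [Nat.primesLE, Nat.primesBelow, sum_filter, Set.indicator_apply]

lemma tendsto_totient_primorial_div :
    Tendsto (fun z => (φ (primorial z) / primorial z : ℝ)) atTop (𝓝 0) :=
  squeeze_zero (fun _ => by positivity)
    (fun z => by
      simpa only [Function.comp_apply, primeFactors_primorial] using
        totient_div_le_exp_neg_sum_inv (primorial z))
    (tendsto_exp_atBot.comp (tendsto_neg_atTop_atBot.comp tendsto_sum_primesLE_inv))

theorem entropy_primes_zero : entropyNat {n : ℕ | n.Prime} = 0 := by
  have hlim : Tendsto (fun z => ENNReal.ofReal (φ (primorial z) / primorial z)) atTop (𝓝 0) := by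
    simpa using ENNReal.tendsto_ofReal tendsto_totient_primorial_div
  exact nonpos_iff_eq_zero.1 <|
    ge_of_tendsto' hlim fun z => limsup_ofReal_div_le (logb_indexNatN_primes_le · z)
end
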